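/- arXiv:2303.16457 — 6 statements merged into one kernel-verified Lean document; each statement's English description precedes it below -/
import Mathlib

section
/- Let M = Λ + N be an irreducible Metzler matrix where Λ is a negative diagonal matrix and N is an irreducible nonnegative matrix. Then s(M) < 0 if and only if ρ(−Λ⁻¹ N) < 1; s(M) = 0 if and only if ρ(−Λ⁻¹ N) = 1; and s(M) > 0 if and only if ρ(−Λ⁻¹ N) > 1; where s(M) is the largest real part of eigenvalues of M and ρ denotes the spectral radius. -/
open Matrix

/-- Spectral abscissa: largest real part of the (complex) eigenvalues. -/
noncomputable def spectAbs {m : Type*} [Fintype m] [DecidableEq m]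
    (M : Matrix m m ℝ) : ℝ :=
  sSup {x : ℝ | ∃ μ ∈ spectrum ℂ (M.map (Complex.ofReal ·)), x = μ.re}

/-- Spectral radius: largest modulus of the (complex) eigenvalues. -/
noncomputable def specRad {m : Type*} [Fintype m] [DecidableEq m]
    (M : Matrix m m ℝ) : ℝ :=
  sSup {x : ℝ | ∃ μ ∈ spectrum ℂ (M.map (Complex.ofReal ·)), x = ‖μ‖}

/-- A nonnegative matrix is irreducible if for every `(i, j)` some power has a
strictly positive `(i, j)` entry. -/
def IrredNonneg {n : ℕ} (B : Matrix (Fin n) (Fin n) ℝ) : Prop :=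
  (∀ i j, 0 ≤ B i j) ∧ ∀ i j, ∃ k : ℕ, 0 < (B ^ (k + 1)) i j

namespace PFAux

variable {n : ℕ}

lemma scalar_sub_mulVec (M' : Matrix (Fin n) (Fin n) ℂ) (μ : ℂ) (x : Fin n → ℂ) :
    (μ • (1 : Matrix (Fin n) (Fin n) ℂ) - M') *ᵥ x = μ • x - M' *ᵥ x := by
  rw [sub_mulVec, smul_mulVec, one_mulVec]

lemma mem_spectrum_iff_det (M' : Matrix (Fin n) (Fin n) ℂ) (μ : ℂ) :
    μ ∈ spectrum ℂ M' ↔ (μ • (1 : Matrix (Fin n) (Fin n) ℂ) - M').det = 0 := by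
  rw [spectrum.mem_iff, Algebra.algebraMap_eq_smul_one, Matrix.isUnit_iff_isUnit_det,
    isUnit_iff_ne_zero, not_not]

lemma mem_spectrum_iff_eigen (M' : Matrix (Fin n) (Fin n) ℂ) (μ : ℂ) :
    μ ∈ spectrum ℂ M' ↔ ∃ x, x ≠ 0 ∧ M' *ᵥ x = μ • x := by
  rw [mem_spectrum_iff_det, ← Matrix.exists_mulVec_eq_zero_iff]
  constructor
  · rintro ⟨x, hx, h⟩
    refine ⟨x, hx, ?_⟩
    rw [scalar_sub_mulVec, sub_eq_zero] at h
    exact h.symm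
  · rintro ⟨x, hx, h⟩
    refine ⟨x, hx, ?_⟩
    rw [scalar_sub_mulVec, sub_eq_zero]
    exact h.symm

lemma eval_charpoly (M' : Matrix (Fin n) (Fin n) ℂ) (μ : ℂ) :
    M'.charpoly.eval μ = (μ • (1 : Matrix (Fin n) (Fin n) ℂ) - M').det := by
  rw [Matrix.charpoly, eval_det, Matrix.matPolyEquiv_charmatrix]
  rw [Polynomial.eval_sub, Polynomial.eval_X, Polynomial.eval_C, Matrix.scalar_apply,
    Matrix.smul_one_eq_diagonal]

lemma spectrum_finite (M' : Matrix (Fin n) (Fin n) ℂ) : (spectrum ℂ M').Finite := by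
  have hne : M'.charpoly ≠ 0 := (Matrix.charpoly_monic M').ne_zero
  refine Set.Finite.subset (M'.charpoly.roots.toFinset : Finset ℂ).finite_toSet ?_
  intro μ hμ
  rw [mem_spectrum_iff_det, ← eval_charpoly] at hμ
  simp only [Finset.coe_sort_coe, Multiset.mem_toFinset, Finset.mem_coe]
  rw [Polynomial.mem_roots hne]
  exact hμ

lemma spectrum_nonempty (hn : 0 < n) (M' : Matrix (Fin n) (Fin n) ℂ) :
    (spectrum ℂ M').Nonempty := by
  have hdeg : M'.charpoly.degree ≠ 0 := by
    rw [Matrix.charpoly_degree_eq_dim]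
    simp only [Fintype.card_fin]
    exact_mod_cast hn.ne'
  obtain ⟨μ, hμ⟩ := Complex.isAlgClosed.exists_root M'.charpoly hdeg
  exact ⟨μ, (mem_spectrum_iff_det M' μ).mpr (by rw [← eval_charpoly]; exact hμ)⟩

lemma map_mulVec_cast (B : Matrix (Fin n) (Fin n) ℝ) (v : Fin n → ℝ) :
    (B.map (Complex.ofReal ·)) *ᵥ (fun j => (v j : ℂ)) = fun i => ((B *ᵥ v) i : ℂ) := by
  funext i
  simp [Matrix.mulVec, dotProduct, Matrix.map_apply]

lemma real_eig_mem_spectrum (B : Matrix (Fin n) (Fin n) ℝ) (v : Fin n → ℝ) (hv : v ≠ 0)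
    (r : ℝ) (h : B *ᵥ v = r • v) :
    (r : ℂ) ∈ spectrum ℂ (B.map (Complex.ofReal ·)) := by
  rw [mem_spectrum_iff_eigen]
  refine ⟨fun j => (v j : ℂ), ?_, ?_⟩
  · intro hc
    apply hv
    funext j
    have := congrFun hc j
    simpa using this
  · rw [map_mulVec_cast, h]
    funext i
    simp [Pi.smul_apply]

/-- Entries of powers of entrywise-nonnegative matrices are nonnegative. -/
lemma entry_pow_nonneg {B : Matrix (Fin n) (Fin n) ℝ} (hB : ∀ i j, 0 ≤ B i j) (k : ℕ) :
    ∀ i j, 0 ≤ (B ^ k) i j := by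
  induction k with
  | zero => intro i j; by_cases h : i = j <;> simp [h, Matrix.one_apply]
  | succ k ih =>
    intro i j
    rw [pow_succ, Matrix.mul_apply]
    exact Finset.sum_nonneg fun l _ => mul_nonneg (ih i l) (hB l j)

/-- Entrywise monotonicity of powers. -/
lemma entry_pow_le {C E : Matrix (Fin n) (Fin n) ℝ} (hC : ∀ i j, 0 ≤ C i j)
    (hle : ∀ i j, C i j ≤ E i j) (k : ℕ) :
    ∀ i j, (C ^ k) i j ≤ (E ^ k) i j := by
  induction k with
  | zero => intro i j; simp
  | succ k ih =>
    intro i j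
    rw [pow_succ, pow_succ, Matrix.mul_apply, Matrix.mul_apply]
    refine Finset.sum_le_sum fun l _ => ?_
    have h1 : 0 ≤ (C ^ k) i l := entry_pow_nonneg hC k i l
    have h2 : 0 ≤ C l j := hC l j
    calc (C ^ k) i l * C l j ≤ (E ^ k) i l * C l j :=
          mul_le_mul_of_nonneg_right (ih i l) h2
      _ ≤ (E ^ k) i l * E l j :=
          mul_le_mul_of_nonneg_left (hle l j) (le_trans h1 (ih i l))

/-- Collatz–Wielandt / Perron–Frobenius existence for irreducible nonneg matrices. -/
theorem cw_main (hn : 0 < n) (B : Matrix (Fin n) (Fin n) ℝ)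
    (hB : ∀ i j, 0 ≤ B i j) (hirr : ∀ i j, ∃ k : ℕ, 0 < (B ^ (k + 1)) i j) :
    ∃ r v, 0 ≤ r ∧ (∀ i, 0 ≤ v i) ∧ v ≠ 0 ∧ B *ᵥ v = r • v ∧
      ∀ (lam : ℝ) (w : Fin n → ℝ), (∀ i, 0 ≤ w i) → w ≠ 0 →
        (∀ i, lam * w i ≤ (B *ᵥ w) i) → lam ≤ r := by
  classical
  have hne0 : Nonempty (Fin n) := ⟨⟨0, hn⟩⟩
  set C : ℝ := ∑ i, ∑ j, B i j with hC
  set K : Set (ℝ × (Fin n → ℝ)) :=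
    {p | 0 ≤ p.1 ∧ (∀ i, 0 ≤ p.2 i) ∧ (∑ i, p.2 i) = 1 ∧
      ∀ i, p.1 * p.2 i ≤ (B *ᵥ p.2) i} with hK
  have hbound : ∀ p ∈ K, p.1 ≤ C := by
    rintro ⟨lam, w⟩ ⟨hl0, hw0, hw1, hineq⟩
    have h1 : lam = ∑ i, lam * w i := by rw [← Finset.mul_sum, hw1, mul_one]
    have h2 : ∑ i, lam * w i ≤ ∑ i, (B *ᵥ w) i := Finset.sum_le_sum fun i _ => hineq i
    have h3 : ∑ i, (B *ᵥ w) i = ∑ j, (∑ i, B i j) * w j := by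
      simp only [Matrix.mulVec, dotProduct, Finset.sum_mul]
      exact Finset.sum_comm
    have h4 : ∀ j, (∑ i, B i j) * w j ≤ C * w j := by
      intro j
      refine mul_le_mul_of_nonneg_right ?_ (hw0 j)
      calc ∑ i, B i j ≤ ∑ i, ∑ j', B i j' :=
            Finset.sum_le_sum fun i _ =>
              Finset.single_le_sum (fun j' _ => hB i j') (Finset.mem_univ j)
        _ = C := rfl
    have h5 : ∑ j, C * w j = C := by rw [← Finset.mul_sum, hw1, mul_one]
    calc lam = ∑ i, lam * w i := h1
      _ ≤ ∑ i, (B *ᵥ w) i := h2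
      _ = ∑ j, (∑ i, B i j) * w j := h3
      _ ≤ ∑ j, C * w j := Finset.sum_le_sum fun j _ => h4 j
      _ = C := h5
  have hKclosed : IsClosed K := by
    have c1 : IsClosed {p : ℝ × (Fin n → ℝ) | 0 ≤ p.1} :=
      isClosed_le continuous_const continuous_fst
    have c2 : ∀ i, IsClosed {p : ℝ × (Fin n → ℝ) | 0 ≤ p.2 i} := fun i =>
      isClosed_le continuous_const ((continuous_apply i).comp continuous_snd)
    have c3 : IsClosed {p : ℝ × (Fin n → ℝ) | ∑ i, p.2 i = 1} :=
      isClosed_eq (continuous_finset_sum _ fun i _ =>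
        (continuous_apply i).comp continuous_snd) continuous_const
    have c4 : ∀ i, IsClosed {p : ℝ × (Fin n → ℝ) | p.1 * p.2 i ≤ (B *ᵥ p.2) i} := fun i => by
      refine isClosed_le (continuous_fst.mul ((continuous_apply i).comp continuous_snd)) ?_
      simp only [Matrix.mulVec, dotProduct]
      exact continuous_finset_sum _ fun j _ =>
        continuous_const.mul ((continuous_apply j).comp continuous_snd)
    have hKeq : K = {p : ℝ × (Fin n → ℝ) | 0 ≤ p.1} ∩
        ((⋂ i, {p : ℝ × (Fin n → ℝ) | 0 ≤ p.2 i}) ∩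
          ({p : ℝ × (Fin n → ℝ) | ∑ i, p.2 i = 1} ∩
            ⋂ i, {p : ℝ × (Fin n → ℝ) | p.1 * p.2 i ≤ (B *ᵥ p.2) i})) := by
      ext p
      simp only [hK, Set.mem_setOf_eq, Set.mem_inter_iff, Set.mem_iInter]
      try tauto
    rw [hKeq]
    exact c1.inter ((isClosed_iInter c2).inter (c3.inter (isClosed_iInter c4)))
  have hKsub : K ⊆ Set.Icc (0:ℝ) C ×ˢ Metric.closedBall (0 : Fin n → ℝ) 1 := by
    rintro ⟨lam, w⟩ hp
    obtain ⟨hl0, hw0, hw1, hineq⟩ := hp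
    refine ⟨⟨hl0, hbound _ ⟨hl0, hw0, hw1, hineq⟩⟩, ?_⟩
    rw [Metric.mem_closedBall, dist_zero_right, pi_norm_le_iff_of_nonneg zero_le_one]
    intro i
    rw [Real.norm_eq_abs, abs_of_nonneg (hw0 i)]
    calc w i ≤ ∑ j, w j := Finset.single_le_sum (fun j _ => hw0 j) (Finset.mem_univ i)
      _ = 1 := hw1
  have hKcpt : IsCompact K :=
    (isCompact_Icc.prod (isCompact_closedBall _ _)).of_isClosed_subset hKclosed hKsub
  have hnR : (0:ℝ) < n := by exact_mod_cast hn
  have hmem0 : ((0:ℝ), fun _ : Fin n => (n:ℝ)⁻¹) ∈ K := by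
    refine ⟨le_refl 0, fun i => by positivity, ?_, fun i => ?_⟩
    · simp only [Finset.sum_const, Finset.card_univ, Fintype.card_fin, nsmul_eq_mul]
      field_simp
    · simp only [zero_mul]
      show (0:ℝ) ≤ ∑ j, B i j * (n:ℝ)⁻¹
      exact Finset.sum_nonneg fun j _ => mul_nonneg (hB i j) (inv_nonneg.mpr (Nat.cast_nonneg n))
  obtain ⟨p, hpK, hpmax⟩ := hKcpt.exists_isMaxOn ⟨_, hmem0⟩ continuous_fst.continuousOn
  obtain ⟨hr0, hv0, hv1, hvineq⟩ := hpK
  set r := p.1 with hrdef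
  set v := p.2 with hvdef
  have hvne : v ≠ 0 := by
    intro hc
    rw [hc] at hv1
    simp at hv1
  have hmax : ∀ (lam : ℝ) (w : Fin n → ℝ), (∀ i, 0 ≤ w i) → w ≠ 0 →
      (∀ i, lam * w i ≤ (B *ᵥ w) i) → lam ≤ r := by
    intro lam w hw0 hwne hineq
    rcases le_or_gt lam 0 with h | h
    · exact h.trans hr0
    · have hσ : 0 < ∑ i, w i := by
        obtain ⟨i0, hi0⟩ : ∃ i, 0 < w i := by
          by_contra hc
          push_neg at hc
          exact hwne (funext fun i => le_antisymm (hc i) (hw0 i))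
        exact Finset.sum_pos' (fun i _ => hw0 i) ⟨i0, Finset.mem_univ i0, hi0⟩
      set σ := ∑ i, w i with hσdef
      have hq : ((lam : ℝ), σ⁻¹ • w) ∈ K := by
        refine ⟨h.le, fun i => mul_nonneg (inv_nonneg.mpr hσ.le) (hw0 i), ?_, fun i => ?_⟩
        · simp only [Pi.smul_apply, smul_eq_mul, ← Finset.mul_sum, ← hσdef]
          exact inv_mul_cancel₀ hσ.ne'
        · have hmv : (B *ᵥ (σ⁻¹ • w)) i = σ⁻¹ * (B *ᵥ w) i := by
            rw [Matrix.mulVec_smul]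
            simp [Pi.smul_apply, smul_eq_mul]
          rw [hmv]
          simp only [Pi.smul_apply, smul_eq_mul]
          calc lam * (σ⁻¹ * w i) = σ⁻¹ * (lam * w i) := by ring
            _ ≤ σ⁻¹ * (B *ᵥ w) i :=
              mul_le_mul_of_nonneg_left (hineq i) (inv_nonneg.mpr hσ.le)
      exact hpmax hq
  by_cases hzz : B *ᵥ v = r • v
  · exact ⟨r, v, hr0, hv0, hvne, hzz, hmax⟩
  exfalso
  set z : Fin n → ℝ := B *ᵥ v - r • v with hzdef
  have hz0 : ∀ i, 0 ≤ z i := by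
    intro i
    have := hvineq i
    simp only [hzdef, Pi.sub_apply, Pi.smul_apply, smul_eq_mul]
    linarith
  have hzne : z ≠ 0 := sub_ne_zero.mpr hzz
  choose f hf using fun p : Fin n × Fin n => hirr p.1 p.2
  set K0 : ℕ := Finset.univ.sup f with hK0
  set Q : Matrix (Fin n) (Fin n) ℝ := ∑ k ∈ Finset.range (K0 + 2), B ^ k with hQdef
  have hQ0 : ∀ i j, 0 ≤ Q i j := by
    intro i j
    rw [hQdef, Matrix.sum_apply]
    exact Finset.sum_nonneg fun k _ => entry_pow_nonneg hB k i j
  have hQpos : ∀ i j, 0 < Q i j := by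
    intro i j
    rw [hQdef, Matrix.sum_apply]
    have hmem : f (i, j) + 1 ∈ Finset.range (K0 + 2) := by
      rw [Finset.mem_range]
      have := Finset.le_sup (f := f) (Finset.mem_univ (i, j))
      omega
    exact lt_of_lt_of_le (hf (i, j))
      (Finset.single_le_sum (fun k _ => entry_pow_nonneg hB k i j) hmem)
  have hQmulpos : ∀ (w : Fin n → ℝ), (∀ i, 0 ≤ w i) → w ≠ 0 → ∀ i, 0 < (Q *ᵥ w) i := by
    intro w hw0 hwne i
    obtain ⟨j0, hj0⟩ : ∃ j, 0 < w j := by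
      by_contra hc
      push_neg at hc
      exact hwne (funext fun j => le_antisymm (hc j) (hw0 j))
    show 0 < ∑ j, Q i j * w j
    exact Finset.sum_pos' (fun j _ => mul_nonneg (hQ0 i j) (hw0 j))
      ⟨j0, Finset.mem_univ j0, mul_pos (hQpos i j0) hj0⟩
  have hQB : Q * B = B * Q := by
    rw [hQdef, Finset.sum_mul, Finset.mul_sum]
    exact Finset.sum_congr rfl fun k _ => by rw [← pow_succ, ← pow_succ']
  set v' : Fin n → ℝ := Q *ᵥ v with hv'def
  set z' : Fin n → ℝ := Q *ᵥ z with hz'def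
  have hv'pos : ∀ i, 0 < v' i := hQmulpos v hv0 hvne
  have hz'pos : ∀ i, 0 < z' i := hQmulpos z hz0 hzne
  have hBv' : z' = B *ᵥ v' - r • v' := by
    rw [hz'def, hzdef, Matrix.mulVec_sub, Matrix.mulVec_smul, hv'def,
      Matrix.mulVec_mulVec, hQB, ← Matrix.mulVec_mulVec]
  set ε : ℝ := Finset.univ.inf' Finset.univ_nonempty (fun i => z' i / v' i) with hεdef
  have hεpos : 0 < ε := by
    rw [hεdef, Finset.lt_inf'_iff]
    exact fun i _ => div_pos (hz'pos i) (hv'pos i)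
  have hεle : ∀ i, ε * v' i ≤ z' i := by
    intro i
    have h1 : ε ≤ z' i / v' i := Finset.inf'_le _ (Finset.mem_univ i)
    exact (le_div_iff₀ (hv'pos i)).mp h1
  have hfinal : ∀ i, (r + ε) * v' i ≤ (B *ᵥ v') i := by
    intro i
    have hzi : z' i = (B *ᵥ v') i - r * v' i := by
      rw [hBv']
      simp [Pi.sub_apply, Pi.smul_apply, smul_eq_mul]
    have h2 := hεle i
    rw [hzi] at h2
    nlinarith
  have hcontra : r + ε ≤ r := by
    refine hmax (r + ε) v' (fun i => (hv'pos i).le) ?_ hfinal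
    intro hc
    have h0 := congrFun hc ⟨0, hn⟩
    simp only [Pi.zero_apply] at h0
    exact (hv'pos ⟨0, hn⟩).ne' h0
  linarith


/-- `specRad` of an irreducible nonnegative matrix: Perron eigenvector and
Collatz–Wielandt maximality. -/
theorem specRad_spec (hn : 0 < n) (B : Matrix (Fin n) (Fin n) ℝ)
    (hB : ∀ i j, 0 ≤ B i j) (hirr : ∀ i j, ∃ k : ℕ, 0 < (B ^ (k + 1)) i j) :
    (∃ v, (∀ i, 0 ≤ v i) ∧ v ≠ 0 ∧ B *ᵥ v = specRad B • v) ∧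
      ∀ (lam : ℝ) (w : Fin n → ℝ), (∀ i, 0 ≤ w i) → w ≠ 0 →
        (∀ i, lam * w i ≤ (B *ᵥ w) i) → lam ≤ specRad B := by
  obtain ⟨r, v, hr0, hv0, hvne, heig, hmax⟩ := cw_main hn B hB hirr
  have hrmem : (r : ℂ) ∈ spectrum ℂ (B.map (Complex.ofReal ·)) :=
    real_eig_mem_spectrum B v hvne r heig
  have hub : ∀ x ∈ {x : ℝ | ∃ μ ∈ spectrum ℂ (B.map (Complex.ofReal ·)), x = ‖μ‖},
      x ≤ r := by
    rintro x ⟨μ, hμ, rfl⟩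
    obtain ⟨z, hzne, hz⟩ := (mem_spectrum_iff_eigen _ μ).mp hμ
    set w : Fin n → ℝ := fun i => ‖z i‖ with hw
    have hwne : w ≠ 0 := by
      intro hc
      apply hzne
      funext i
      have := congrFun hc i
      simp only [hw, Pi.zero_apply, norm_eq_zero] at this
      exact this
    refine hmax _ w (fun i => norm_nonneg _) hwne fun i => ?_
    have hrow : (B.map (Complex.ofReal ·) *ᵥ z) i = μ * z i := by
      rw [hz]; simp [Pi.smul_apply, smul_eq_mul]
    have : ‖μ‖ * w i = ‖(B.map (Complex.ofReal ·) *ᵥ z) i‖ := by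
      rw [hrow, norm_mul]
    rw [this]
    calc ‖(B.map (Complex.ofReal ·) *ᵥ z) i‖
        = ‖∑ j, (B i j : ℂ) * z j‖ := by
          simp [Matrix.mulVec, dotProduct, Matrix.map_apply]
      _ ≤ ∑ j, ‖(B i j : ℂ) * z j‖ := norm_sum_le _ _
      _ = ∑ j, B i j * w j := by
          refine Finset.sum_congr rfl fun j _ => ?_
          rw [norm_mul, Complex.norm_of_nonneg (hB i j)]
      _ = (B *ᵥ w) i := rfl
  have hsR : specRad B = r := by
    apply le_antisymm
    · exact csSup_le ⟨r, ⟨(r : ℂ), hrmem, by rw [Complex.norm_of_nonneg hr0]⟩⟩ hub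
    · exact le_csSup ⟨r, hub⟩ ⟨(r : ℂ), hrmem, by rw [Complex.norm_of_nonneg hr0]⟩
  rw [hsR]
  exact ⟨⟨v, hv0, hvne, heig⟩, hmax⟩

lemma spectAbs_bddAbove (M : Matrix (Fin n) (Fin n) ℝ) :
    BddAbove {x : ℝ | ∃ μ ∈ spectrum ℂ (M.map (Complex.ofReal ·)), x = μ.re} := by
  have : {x : ℝ | ∃ μ ∈ spectrum ℂ (M.map (Complex.ofReal ·)), x = μ.re}
      = Complex.re '' (spectrum ℂ (M.map (Complex.ofReal ·))) := by
    ext x; constructor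
    · rintro ⟨μ, hμ, rfl⟩; exact ⟨μ, hμ, rfl⟩
    · rintro ⟨μ, hμ, rfl⟩; exact ⟨μ, hμ, rfl⟩
  rw [this]
  exact ((spectrum_finite _).image _).bddAbove

lemma le_spectAbs (M : Matrix (Fin n) (Fin n) ℝ) {μ : ℂ}
    (hμ : μ ∈ spectrum ℂ (M.map (Complex.ofReal ·))) : μ.re ≤ spectAbs M :=
  le_csSup (spectAbs_bddAbove M) ⟨μ, hμ, rfl⟩

lemma spectAbs_attained (hn : 0 < n) (M : Matrix (Fin n) (Fin n) ℝ) :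
    ∃ μ ∈ spectrum ℂ (M.map (Complex.ofReal ·)), spectAbs M = μ.re := by
  have hEq : {x : ℝ | ∃ μ ∈ spectrum ℂ (M.map (Complex.ofReal ·)), x = μ.re}
      = Complex.re '' (spectrum ℂ (M.map (Complex.ofReal ·))) := by
    ext x; constructor
    · rintro ⟨μ, hμ, rfl⟩; exact ⟨μ, hμ, rfl⟩
    · rintro ⟨μ, hμ, rfl⟩; exact ⟨μ, hμ, rfl⟩
  have hfin : ({x : ℝ | ∃ μ ∈ spectrum ℂ (M.map (Complex.ofReal ·)), x = μ.re}).Finite := by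
    rw [hEq]; exact (spectrum_finite _).image _
  have hne : ({x : ℝ | ∃ μ ∈ spectrum ℂ (M.map (Complex.ofReal ·)), x = μ.re}).Nonempty := by
    obtain ⟨μ, hμ⟩ := spectrum_nonempty hn (M.map (Complex.ofReal ·))
    exact ⟨μ.re, μ, hμ, rfl⟩
  have := hne.csSup_mem hfin
  exact this

end PFAux

set_option maxHeartbeats 2000000 in
open PFAux in
/-- For `M = Λ + N` with `Λ` negative diagonal and `N` irreducible
nonnegative: `s(M) < 0 ↔ ρ(−Λ⁻¹N) < 1`, `s(M) = 0 ↔ ρ(−Λ⁻¹N) = 1`, and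
`s(M) > 0 ↔ ρ(−Λ⁻¹N) > 1`. -/
theorem stmt4 (n : ℕ) (hn : 0 < n) (d : Fin n → ℝ) (hd : ∀ i, d i < 0)
    (N : Matrix (Fin n) (Fin n) ℝ) (hN : IrredNonneg N) :
    (spectAbs (Matrix.diagonal d + N) < 0 ↔
      specRad (-((Matrix.diagonal d)⁻¹ * N)) < 1) ∧
    (spectAbs (Matrix.diagonal d + N) = 0 ↔
      specRad (-((Matrix.diagonal d)⁻¹ * N)) = 1) ∧
    (0 < spectAbs (Matrix.diagonal d + N) ↔
      1 < specRad (-((Matrix.diagonal d)⁻¹ * N))) := by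
  obtain ⟨hNpos, hNirr⟩ := hN
  have hne0 : Nonempty (Fin n) := ⟨⟨0, hn⟩⟩
  have hdinv : (Matrix.diagonal d)⁻¹ = Matrix.diagonal (fun i => (d i)⁻¹) := by
    apply Matrix.inv_eq_right_inv
    rw [Matrix.diagonal_mul_diagonal]
    have h1 : (fun i => d i * (d i)⁻¹) = fun _ : Fin n => (1:ℝ) :=
      funext fun i => mul_inv_cancel₀ (hd i).ne
    rw [h1, Matrix.diagonal_one]
  have hAentry : ∀ i j, (-((Matrix.diagonal d)⁻¹ * N)) i j = (-(d i))⁻¹ * N i j := by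
    intro i j
    rw [hdinv]
    simp only [Matrix.neg_apply, Matrix.diagonal_mul]
    rw [inv_neg, neg_mul]
  set A : Matrix (Fin n) (Fin n) ℝ := -((Matrix.diagonal d)⁻¹ * N) with hAdef
  set M : Matrix (Fin n) (Fin n) ℝ := Matrix.diagonal d + N with hMdef
  have hepos : ∀ i, 0 < (-(d i))⁻¹ := fun i => inv_pos.mpr (by linarith [hd i])
  have hA0 : ∀ i j, 0 ≤ A i j := fun i j =>
    hAentry i j ▸ mul_nonneg (hepos i).le (hNpos i j)
  set γ : ℝ := Finset.univ.inf' Finset.univ_nonempty (fun i => (-(d i))⁻¹) with hγdef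
  have hγpos : 0 < γ := by
    rw [hγdef, Finset.lt_inf'_iff]
    exact fun i _ => hepos i
  have hγle : ∀ i, γ ≤ (-(d i))⁻¹ := fun i => Finset.inf'_le _ (Finset.mem_univ i)
  have hAirr : ∀ i j, ∃ k : ℕ, 0 < (A ^ (k + 1)) i j := by
    intro i j
    obtain ⟨k, hk⟩ := hNirr i j
    refine ⟨k, ?_⟩
    have hle : ∀ i j, (γ • N) i j ≤ A i j := fun i j => by
      rw [Matrix.smul_apply, smul_eq_mul, hAentry]
      exact mul_le_mul_of_nonneg_right (hγle i) (hNpos i j)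
    have h0 : ∀ i j, 0 ≤ (γ • N) i j := fun i j => by
      rw [Matrix.smul_apply, smul_eq_mul]
      exact mul_nonneg hγpos.le (hNpos i j)
    have hcmp := entry_pow_le h0 hle (k+1) i j
    have hsp : ((γ • N) ^ (k+1)) i j = γ^(k+1) * (N^(k+1)) i j := by
      rw [smul_pow, Matrix.smul_apply, smul_eq_mul]
    calc (0:ℝ) < γ^(k+1) * (N^(k+1)) i j := mul_pos (pow_pos hγpos _) hk
      _ = ((γ • N) ^ (k+1)) i j := hsp.symm
      _ ≤ (A ^ (k+1)) i j := hcmp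
  have hAmv : ∀ (w : Fin n → ℝ) i, (A *ᵥ w) i = (-(d i))⁻¹ * (N *ᵥ w) i := by
    intro w i
    simp only [Matrix.mulVec, dotProduct, hAentry, Finset.mul_sum, mul_assoc]
  obtain ⟨⟨vA, hvA0, hvAne, hvAeig⟩, hAmax⟩ := specRad_spec hn A hA0 hAirr
  set ρ : ℝ := specRad A with hρdef
  set s : ℝ := spectAbs M with hsdef
  set δ : ℝ := Finset.univ.inf' Finset.univ_nonempty (fun i => -(d i)) with hδdef
  have hδpos : 0 < δ := by
    rw [hδdef, Finset.lt_inf'_iff]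
    exact fun i _ => by linarith [hd i]
  have hδle : ∀ i, δ ≤ -(d i) := fun i => Finset.inf'_le _ (Finset.mem_univ i)
  set c : ℝ := 1 + Finset.univ.sup' Finset.univ_nonempty (fun i => -(d i)) with hcdef
  have hcle : ∀ i, -(d i) ≤ c - 1 := fun i => by
    rw [hcdef]
    have := Finset.le_sup' (fun i => -(d i)) (Finset.mem_univ i)
    linarith
  set B1 : Matrix (Fin n) (Fin n) ℝ := Matrix.diagonal (fun i => d i + c) + N with hB1def
  have hB1entry : ∀ i j, B1 i j = (if i = j then d i + c else 0) + N i j := by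
    intro i j
    rw [hB1def, Matrix.add_apply, Matrix.diagonal_apply]
  have hB1geN : ∀ i j, N i j ≤ B1 i j := fun i j => by
    rw [hB1entry]
    have h2 : (0:ℝ) ≤ if i = j then d i + c else 0 := by
      split
      · have := hcle i; linarith
      · exact le_refl _
    linarith
  have hB10 : ∀ i j, 0 ≤ B1 i j := fun i j => le_trans (hNpos i j) (hB1geN i j)
  have hB1irr : ∀ i j, ∃ k : ℕ, 0 < (B1 ^ (k + 1)) i j := by
    intro i j
    obtain ⟨k, hk⟩ := hNirr i j
    exact ⟨k, lt_of_lt_of_le hk (entry_pow_le hNpos hB1geN (k+1) i j)⟩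
  obtain ⟨⟨u, hu0, hune, hueig⟩, hB1max⟩ := specRad_spec hn B1 hB10 hB1irr
  have hB1mv : ∀ (w : Fin n → ℝ) i, (B1 *ᵥ w) i = (d i + c) * w i + (N *ᵥ w) i := by
    intro w i
    rw [hB1def, Matrix.add_mulVec, Pi.add_apply, Matrix.mulVec_diagonal]
  have hback : 1 ≤ ρ → (ρ - 1) * δ ≤ s := by
    intro hρ1
    have hNvA : ∀ i, (N *ᵥ vA) i = ρ * (-(d i)) * vA i := by
      intro i
      have h := congrFun hvAeig i
      rw [hAmv] at h
      simp only [Pi.smul_apply, smul_eq_mul] at h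
      have hdne : -(d i) ≠ 0 := by linarith [hd i]
      have h3 := congrArg (fun t => (-(d i)) * t) h
      simp only [← mul_assoc, mul_inv_cancel₀ hdne, one_mul] at h3
      rw [h3]
      ring
    have hstep : ∀ i, (c + (ρ - 1) * δ) * vA i ≤ (B1 *ᵥ vA) i := by
      intro i
      rw [hB1mv, hNvA i]
      have h1 := hδle i
      have h2 := hvA0 i
      nlinarith [mul_nonneg (mul_nonneg (by linarith : (0:ℝ) ≤ ρ - 1) h2)
        (by linarith : (0:ℝ) ≤ -(d i) - δ)]
    have hspecB : c + (ρ - 1) * δ ≤ specRad B1 := hB1max _ vA hvA0 hvAne hstep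
    have hMu : M *ᵥ u = (specRad B1 - c) • u := by
      funext i
      have h := congrFun hueig i
      rw [hB1mv] at h
      have hMi : (M *ᵥ u) i = d i * u i + (N *ᵥ u) i := by
        rw [hMdef, Matrix.add_mulVec, Pi.add_apply, Matrix.mulVec_diagonal]
      rw [hMi, Pi.smul_apply, smul_eq_mul]
      simp only [Pi.smul_apply, smul_eq_mul] at h
      linarith [h]
    have hmem := real_eig_mem_spectrum M u hune _ hMu
    have hle := le_spectAbs M hmem
    rw [Complex.ofReal_re] at hle
    linarith [hspecB, hle]
  have hforward : 0 ≤ s → 1 + s * γ ≤ ρ := by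
    intro hs0
    obtain ⟨μ, hμspec, hμre⟩ := spectAbs_attained hn M
    obtain ⟨x, hxne, hxeig⟩ := (mem_spectrum_iff_eigen _ μ).mp hμspec
    set w : Fin n → ℝ := fun i => ‖x i‖ with hwdef
    have hw0 : ∀ i, 0 ≤ w i := fun i => norm_nonneg _
    have hwne : w ≠ 0 := by
      intro hc
      apply hxne
      funext i
      have h := congrFun hc i
      simp only [hwdef, Pi.zero_apply, norm_eq_zero] at h
      exact h
    have hMmap : M.map (Complex.ofReal ·) =
        Matrix.diagonal (fun i => (d i : ℂ)) + N.map (Complex.ofReal ·) := by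
      ext i j
      simp only [hMdef, Matrix.map_apply, Matrix.add_apply, Matrix.diagonal_apply]
      split <;> push_cast <;> ring
    have hrowN : ∀ i, ((N.map (Complex.ofReal ·)) *ᵥ x) i = (μ - (d i : ℂ)) * x i := by
      intro i
      have h := congrFun hxeig i
      rw [hMmap, Matrix.add_mulVec] at h
      simp only [Pi.add_apply, Matrix.mulVec_diagonal, Pi.smul_apply, smul_eq_mul] at h
      linear_combination h
    have htri : ∀ i, ‖μ - (d i : ℂ)‖ * w i ≤ (N *ᵥ w) i := by
      intro i
      have h1 : ‖μ - (d i : ℂ)‖ * w i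
          = ‖((N.map (Complex.ofReal ·)) *ᵥ x) i‖ := by
        rw [hrowN i, norm_mul]
      rw [h1]
      calc ‖((N.map (Complex.ofReal ·)) *ᵥ x) i‖
          = ‖∑ j, (N i j : ℂ) * x j‖ := by
            simp [Matrix.mulVec, dotProduct, Matrix.map_apply]
        _ ≤ ∑ j, ‖(N i j : ℂ) * x j‖ := norm_sum_le _ _
        _ = ∑ j, N i j * w j := by
            refine Finset.sum_congr rfl fun j _ => ?_
            rw [norm_mul, Complex.norm_of_nonneg (hNpos i j)]
        _ = (N *ᵥ w) i := rfl
    have hstep : ∀ i, (1 + s * γ) * w i ≤ (A *ᵥ w) i := by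
      intro i
      rw [hAmv]
      have h2 : s - d i ≤ ‖μ - (d i : ℂ)‖ := by
        have h3 := Complex.re_le_norm (μ - (d i : ℂ))
        have h4 : (μ - (d i:ℂ)).re = μ.re - d i := by simp [Complex.sub_re]
        rw [h4] at h3
        rw [hsdef, hμre]
        linarith
      have h5 : (s - d i) * w i ≤ (N *ᵥ w) i := by
        nlinarith [htri i, hw0 i]
      have h7 : (-(d i))⁻¹ * (-(d i)) = 1 := inv_mul_cancel₀ (by linarith [hd i])
      have h6 : (1 + s * γ) ≤ (-(d i))⁻¹ * (s - d i) := by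
        nlinarith [mul_le_mul_of_nonneg_right (hγle i) hs0]
      have h9 : (-(d i))⁻¹ * (s - d i) * w i ≤ (-(d i))⁻¹ * (N *ᵥ w) i := by
        have h10 := mul_le_mul_of_nonneg_left h5 (hepos i).le
        nlinarith [h10]
      nlinarith [mul_le_mul_of_nonneg_right h6 (hw0 i), h9]
    exact hAmax _ w hw0 hwne hstep
  refine ⟨⟨fun hs => ?_, fun hρ => ?_⟩, ⟨fun hs => ?_, fun hρ => ?_⟩,
    ⟨fun hs => ?_, fun hρ => ?_⟩⟩
  · by_contra h
    push_neg at h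
    have hb := hback h
    nlinarith [mul_nonneg (by linarith : (0:ℝ) ≤ ρ - 1) hδpos.le]
  · by_contra h
    push_neg at h
    have hf := hforward h
    nlinarith [mul_nonneg h hγpos.le]
  · have h1 := hforward (le_of_eq hs.symm)
    have h2 := hback (by nlinarith [mul_nonneg (le_of_eq hs.symm) hγpos.le])
    exact le_antisymm (by nlinarith) (by nlinarith)
  · have h1 := hback (le_of_eq hρ.symm)
    have h0 : (0:ℝ) ≤ s := by nlinarith
    have h2 := hforward h0
    exact le_antisymm (by nlinarith) (by nlinarith)
  · have hf := hforward hs.le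
    nlinarith [mul_pos hs hγpos]
  · have hb := hback hρ.le
    nlinarith [mul_pos (by linarith : (0:ℝ) < ρ - 1) hδpos]
end

section
/- Let D be a positive diagonal matrix, B a nonnegative irreducible matrix, and x̃ a vector with 0 ≪ x̃ ≪ 1 satisfying (−D + (I − X̃) B) x̃ = 0 where X̃ = diag(x̃). Then s(−D + (I − X̃) B) = 0, and moreover x̃ is, up to positive scaling, the unique strictly positive eigenvector of −D + (I − X̃) B, associated with the eigenvalue 0. -/
open Matrix

section Aux
open Finset
variable {n : ℕ}

variable {n : ℕ}

lemma pow_entry_mono {A C : Matrix (Fin n) (Fin n) ℝ}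
    (hC : ∀ i j, 0 ≤ C i j) (hCA : ∀ i j, C i j ≤ A i j) (k : ℕ) :
    ∀ i j, 0 ≤ (C ^ k) i j ∧ (C ^ k) i j ≤ (A ^ k) i j := by
  induction k with
  | zero =>
    intro i j
    simp only [pow_zero, Matrix.one_apply]
    split <;> norm_num
  | succ k ih =>
    intro i j
    rw [pow_succ, pow_succ, Matrix.mul_apply, Matrix.mul_apply]
    refine ⟨Finset.sum_nonneg fun l _ => mul_nonneg (ih i l).1 (hC l j), ?_⟩
    refine Finset.sum_le_sum fun l _ => mul_le_mul (ih i l).2 (hCA l j) (hC l j) ?_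
    exact (ih i l).1.trans (ih i l).2

lemma pow_entry_nonneg {A : Matrix (Fin n) (Fin n) ℝ}
    (hA : ∀ i j, 0 ≤ A i j) (k : ℕ) : ∀ i j, 0 ≤ (A ^ k) i j :=
  fun i j => (pow_entry_mono hA (fun _ _ => le_rfl) k i j).1

lemma pow_entry_pos_mono {A : Matrix (Fin n) (Fin n) ℝ}
    (hA : ∀ i j, 0 ≤ A i j) (hdiag : ∀ i, 0 < A i i) {k : ℕ} {i j : Fin n}
    (h : 0 < (A ^ k) i j) : ∀ m, k ≤ m → 0 < (A ^ m) i j := by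
  intro m hm
  induction m, hm using Nat.le_induction with
  | base => exact h
  | succ m hm ih =>
    rw [pow_succ, Matrix.mul_apply]
    refine Finset.sum_pos' (fun l _ => mul_nonneg (pow_entry_nonneg hA m i l) (hA l j)) ?_
    exact ⟨j, Finset.mem_univ j, mul_pos ih (hdiag j)⟩

/-- eigen-relation for powers -/
lemma mulVec_pow_eig {A : Matrix (Fin n) (Fin n) ℝ} {x : Fin n → ℝ} {a : ℝ}
    (h : A *ᵥ x = a • x) (m : ℕ) : (A ^ m) *ᵥ x = (a ^ m) • x := by
  induction m with
  | zero => simp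
  | succ m ih =>
    rw [pow_succ, ← Matrix.mulVec_mulVec, h, Matrix.mulVec_smul, ih, smul_smul, pow_succ]
    ring_nf

/-- Key comparison lemma: two positive eigenvectors of a primitive nonneg matrix:
either they are proportional (and eigenvalues equal) or `a < b`. -/
lemma eig_compare {A : Matrix (Fin n) (Fin n) ℝ} (hn : 0 < n)
    (hA : ∀ i j, 0 ≤ A i j) {m : ℕ} (hm : m ≠ 0)
    (hpos : ∀ i j, 0 < (A ^ m) i j)
    {x y : Fin n → ℝ} (hx : ∀ i, 0 < x i) (hy : ∀ i, 0 < y i)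
    {a b : ℝ} (ha : 0 < a) (hb : 0 < b)
    (hAx : A *ᵥ x = a • x) (hAy : A *ᵥ y = b • y) :
    (∃ c : ℝ, 0 < c ∧ y = c • x ∧ b = a) ∨ a < b := by
  have hne : (Finset.univ : Finset (Fin n)).Nonempty := ⟨⟨0, hn⟩, Finset.mem_univ _⟩
  obtain ⟨i0, -, hi0⟩ := Finset.exists_min_image Finset.univ (fun i => y i / x i) hne
  set c := y i0 / x i0 with hc
  have hcpos : 0 < c := div_pos (hy i0) (hx i0)
  have hge : ∀ j, c * x j ≤ y j := by
    intro j
    have := hi0 j (Finset.mem_univ j)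
    calc c * x j ≤ (y j / x j) * x j := by
          exact mul_le_mul_of_nonneg_right this (hx j).le
      _ = y j := div_mul_cancel₀ _ (hx j).ne'
  have hci0 : c * x i0 = y i0 := div_mul_cancel₀ _ (hx i0).ne'
  by_cases hz : ∀ j, y j = c * x j
  · left
    refine ⟨c, hcpos, funext fun j => by rw [hz j]; simp [mul_comm], ?_⟩
    have h1 : A *ᵥ y = (c * a) • x := by
      have : y = c • x := funext fun j => by rw [hz j]; simp [mul_comm]
      rw [this, Matrix.mulVec_smul, hAx, smul_smul, mul_comm]
    have h2 := congrFun hAy i0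
    have h3 := congrFun h1 i0
    simp only [Pi.smul_apply, smul_eq_mul] at h2 h3
    have : b * y i0 = a * y i0 := by
      rw [h2.symm.trans h3, hz i0]; ring
    exact mul_right_cancel₀ (hy i0).ne' this
  · right
    push_neg at hz
    obtain ⟨j, hj⟩ := hz
    have hzj : 0 < y j - c * x j := lt_of_le_of_ne (by linarith [hge j]) (by
      intro h; exact hj (by linarith))
    set z : Fin n → ℝ := fun i => y i - c * x i with hzdef
    have hznn : ∀ i, 0 ≤ z i := fun i => by simp [hzdef]; linarith [hge i]
    -- (A^m *ᵥ z) i0 > 0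
    have hAmz : (A ^ m) *ᵥ z = (b ^ m) • y - (c * a ^ m) • x := by
      have : z = y - c • x := funext fun i => by simp [hzdef]
      rw [this, Matrix.mulVec_sub, Matrix.mulVec_smul, mulVec_pow_eig hAx,
        mulVec_pow_eig hAy, smul_smul]
    have hpos0 : 0 < ((A ^ m) *ᵥ z) i0 := by
      rw [Matrix.mulVec, dotProduct]
      refine Finset.sum_pos' (fun l _ => mul_nonneg (pow_entry_nonneg hA m i0 l) (hznn l)) ?_
      exact ⟨j, Finset.mem_univ j, mul_pos (hpos i0 j) hzj⟩
    have h4 := congrFun hAmz i0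
    simp only [Pi.sub_apply, Pi.smul_apply, smul_eq_mul] at h4
    rw [h4, ← hci0] at hpos0
    have h5 : c * x i0 * a ^ m < c * x i0 * b ^ m := by nlinarith
    have h6 : a ^ m < b ^ m := by
      have := mul_pos hcpos (hx i0)
      exact lt_of_mul_lt_mul_left (by nlinarith) this.le
    by_contra hab
    push_neg at hab
    exact absurd (pow_le_pow_left₀ hb.le hab m) (not_le.mpr h6)

/-- If a nonneg matrix has positive eigenvector `x` with eigenvalue `t`,
then any complex eigenvalue `ν` satisfies `|ν| ≤ t`. -/
lemma abs_eig_le {A : Matrix (Fin n) (Fin n) ℝ} (hn : 0 < n)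
    (hA : ∀ i j, 0 ≤ A i j) {x : Fin n → ℝ} (hx : ∀ i, 0 < x i) {t : ℝ}
    (hAx : A *ᵥ x = t • x) {w : Fin n → ℂ} (hw : w ≠ 0) {ν : ℂ}
    (hAw : ∀ i, ∑ j, (A i j : ℂ) * w j = ν * w i) :
    ‖ν‖ ≤ t := by
  have hne : (Finset.univ : Finset (Fin n)).Nonempty := ⟨⟨0, hn⟩, Finset.mem_univ _⟩
  obtain ⟨i0, -, hi0⟩ := Finset.exists_max_image Finset.univ
    (fun i => ‖(w i)‖ / x i) hne
  set c := ‖(w i0)‖ / x i0 with hc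
  obtain ⟨j0, hj0⟩ : ∃ j, w j ≠ 0 := by
    by_contra h; push_neg at h; exact hw (funext h)
  have hcpos : 0 < c := lt_of_lt_of_le
    (div_pos (norm_pos_iff.mpr hj0) (hx j0)) (hi0 j0 (Finset.mem_univ _))
  have hle : ∀ j, ‖(w j)‖ ≤ c * x j := by
    intro j
    have := hi0 j (Finset.mem_univ j)
    calc ‖(w j)‖ = (‖(w j)‖ / x j) * x j :=
          (div_mul_cancel₀ _ (hx j).ne').symm
      _ ≤ c * x j := mul_le_mul_of_nonneg_right this (hx j).le
  have hci0 : ‖(w i0)‖ = c * x i0 := (div_mul_cancel₀ _ (hx i0).ne').symm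
  have key : ‖ν‖ * (c * x i0) ≤ t * (c * x i0) := by
    rw [← hci0]
    calc ‖ν‖ * ‖(w i0)‖ = ‖(ν * w i0)‖ := (norm_mul _ _).symm
      _ = ‖(∑ j, (A i0 j : ℂ) * w j)‖ := by rw [hAw i0]
      _ ≤ ∑ j, ‖((A i0 j : ℂ) * w j)‖ := norm_sum_le _ _
      _ = ∑ j, A i0 j * ‖(w j)‖ := by
          refine Finset.sum_congr rfl fun j _ => ?_
          rw [norm_mul, Complex.norm_real, Real.norm_eq_abs, abs_of_nonneg (hA i0 j)]
      _ ≤ ∑ j, A i0 j * (c * x j) :=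
          Finset.sum_le_sum fun j _ => mul_le_mul_of_nonneg_left (hle j) (hA i0 j)
      _ = c * ∑ j, A i0 j * x j := by rw [Finset.mul_sum]; exact Finset.sum_congr rfl fun j _ => by ring
      _ = c * (t * x i0) := by
          have := congrFun hAx i0
          simp only [Matrix.mulVec, dotProduct, Pi.smul_apply, smul_eq_mul] at this
          rw [this]
      _ = t * ‖(w i0)‖ := by rw [hci0]; ring
  exact le_of_mul_le_mul_right key (mul_pos hcpos (hx i0))

/-- spectrum membership ↔ eigenvector existence, over ℂ. -/
lemma mem_spectrum_iff_eigen {n : ℕ} (M : Matrix (Fin n) (Fin n) ℂ) (μ : ℂ) :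
    μ ∈ spectrum ℂ M ↔ ∃ w : Fin n → ℂ, w ≠ 0 ∧ M *ᵥ w = μ • w := by
  rw [spectrum.mem_iff, Matrix.isUnit_iff_isUnit_det, isUnit_iff_ne_zero, not_ne_iff,
    ← Matrix.exists_mulVec_eq_zero_iff]
  have halg : ∀ (w : Fin n → ℂ), (algebraMap ℂ (Matrix (Fin n) (Fin n) ℂ) μ) *ᵥ w = μ • w := by
    intro w
    rw [Algebra.algebraMap_eq_smul_one, Matrix.smul_mulVec, Matrix.one_mulVec]
  constructor
  · rintro ⟨v, hv, hveq⟩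
    refine ⟨v, hv, ?_⟩
    have h1 : μ • v - M *ᵥ v = 0 := by
      rw [← halg v, ← Matrix.sub_mulVec, hveq]
    have := sub_eq_zero.mp h1
    exact this.symm
  · rintro ⟨w, hw, hweq⟩
    refine ⟨w, hw, ?_⟩
    rw [Matrix.sub_mulVec, hweq, halg, sub_self]

end Aux

section Main
open Finset
/-- If `x̃` with `0 ≪ x̃ ≪ 1` satisfies `(−D + (I − X̃)B)x̃ = 0` with positive
diagonal `D` and irreducible nonnegative `B`, then
`s(−D + (I − X̃)B) = 0` and `x̃` is, up to positive scaling, the unique strictly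
positive eigenvector, associated with the eigenvalue 0. -/
theorem stmt6 (n : ℕ) (hn : 0 < n) (d : Fin n → ℝ) (hd : ∀ i, 0 < d i)
    (B : Matrix (Fin n) (Fin n) ℝ) (hB : IrredNonneg B)
    (xt : Fin n → ℝ) (hx : ∀ i, 0 < xt i ∧ xt i < 1)
    (heq : (-(Matrix.diagonal d) +
      ((1 : Matrix (Fin n) (Fin n) ℝ) - Matrix.diagonal xt) * B) *ᵥ xt = 0) :
    spectAbs (-(Matrix.diagonal d) +
      ((1 : Matrix (Fin n) (Fin n) ℝ) - Matrix.diagonal xt) * B) = 0 ∧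
    ∀ (v : Fin n → ℝ) (μ : ℝ), (∀ i, 0 < v i) →
      (-(Matrix.diagonal d) +
        ((1 : Matrix (Fin n) (Fin n) ℝ) - Matrix.diagonal xt) * B) *ᵥ v = μ • v →
      μ = 0 ∧ ∃ c : ℝ, 0 < c ∧ v = c • xt := by
  have hxpos : ∀ i, 0 < xt i := fun i => (hx i).1
  have hnemp : Nonempty (Fin n) := ⟨⟨0, hn⟩⟩
  set M : Matrix (Fin n) (Fin n) ℝ :=
    -(Matrix.diagonal d) + ((1 : Matrix (Fin n) (Fin n) ℝ) - Matrix.diagonal xt) * B with hMdef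
  -- entry formula for M
  have hsub1 : (1 : Matrix (Fin n) (Fin n) ℝ) - Matrix.diagonal xt
      = Matrix.diagonal (fun i => 1 - xt i) := by
    rw [← Matrix.diagonal_one, Matrix.diagonal_sub]
  have hM : ∀ i j, M i j = (if i = j then -d i else 0) + (1 - xt i) * B i j := by
    intro i j
    rw [hMdef, hsub1]
    rcases eq_or_ne i j with h | h <;>
      simp [Matrix.add_apply, Matrix.neg_apply, Matrix.diagonal_apply, Matrix.diagonal_mul, h]
  set t : ℝ := 1 + ∑ i, d i with htdef
  have htd : ∀ i, d i + 1 ≤ t := by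
    intro i
    have : d i ≤ ∑ j, d j :=
      Finset.single_le_sum (fun j _ => (hd j).le) (Finset.mem_univ i)
    simp [htdef]; linarith
  have htpos : 0 < t := by
    have : (0:ℝ) ≤ ∑ i, d i := Finset.sum_nonneg fun i _ => (hd i).le
    simp [htdef]; linarith
  set A : Matrix (Fin n) (Fin n) ℝ := t • (1 : Matrix (Fin n) (Fin n) ℝ) + M with hAdef
  have hA : ∀ i j, A i j = (if i = j then t else 0) + M i j := by
    intro i j
    simp [hAdef, Matrix.add_apply, Matrix.smul_apply, Matrix.one_apply, mul_ite]
  have hBxnn : ∀ i j, 0 ≤ (1 - xt i) * B i j :=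
    fun i j => mul_nonneg (by linarith [(hx i).2]) (hB.1 i j)
  have hAnn : ∀ i j, 0 ≤ A i j := by
    intro i j
    rw [hA, hM]
    rcases eq_or_ne i j with h | h
    · simp [h]; nlinarith [htd j, hBxnn j j, hd j]
    · simp [h]; exact hBxnn i j
  have hAdiag : ∀ i, 0 < A i i := by
    intro i
    rw [hA, hM]
    simp
    nlinarith [htd i, hBxnn i i]
  -- C := ε • B with ε the min of 1 - xt
  obtain ⟨i1, -, hi1⟩ := Finset.exists_min_image Finset.univ (fun i => 1 - xt i)
    ⟨⟨0, hn⟩, Finset.mem_univ _⟩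
  set ε : ℝ := 1 - xt i1 with hεdef
  have hεpos : 0 < ε := by simp [hεdef]; linarith [(hx i1).2]
  have hεle : ∀ i, ε ≤ 1 - xt i := fun i => hi1 i (Finset.mem_univ i)
  set C : Matrix (Fin n) (Fin n) ℝ := ε • B with hCdef
  have hCnn : ∀ i j, 0 ≤ C i j :=
    fun i j => mul_nonneg hεpos.le (hB.1 i j)
  have hCA : ∀ i j, C i j ≤ A i j := by
    intro i j
    have h1 : C i j ≤ (1 - xt i) * B i j := by
      simp only [hCdef, Matrix.smul_apply, smul_eq_mul]
      exact mul_le_mul_of_nonneg_right (hεle i) (hB.1 i j)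
    rw [hA, hM]
    rcases eq_or_ne i j with h | h
    · subst h; simp; nlinarith [htd i, h1]
    · simp [h]; linarith
  -- primitivity of A
  have hex : ∀ p : Fin n × Fin n, ∃ k, 0 < (A ^ (k + 1)) p.1 p.2 := by
    rintro ⟨i, j⟩
    obtain ⟨k, hk⟩ := hB.2 i j
    refine ⟨k, lt_of_lt_of_le ?_ (pow_entry_mono hCnn hCA (k+1) i j).2⟩
    have : C ^ (k+1) = (ε ^ (k+1)) • (B ^ (k+1)) := by rw [hCdef, smul_pow]
    rw [this]
    simp only [Matrix.smul_apply, smul_eq_mul]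
    exact mul_pos (pow_pos hεpos _) hk
  choose f hf using hex
  set m : ℕ := (Finset.univ.sup f) + 1 with hmdef
  have hmne : m ≠ 0 := Nat.succ_ne_zero _
  have hpos : ∀ i j, 0 < (A ^ m) i j := by
    intro i j
    refine pow_entry_pos_mono hAnn hAdiag (hf (i, j)) m ?_
    exact Nat.succ_le_succ (Finset.le_sup (Finset.mem_univ (i, j)))
  -- eigen-relation for xt
  have hAxt : A *ᵥ xt = t • xt := by
    rw [hAdef, Matrix.add_mulVec, Matrix.smul_mulVec, Matrix.one_mulVec, heq, add_zero]
  -- Part 2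
  have part2 : ∀ (v : Fin n → ℝ) (μ : ℝ), (∀ i, 0 < v i) →
      M *ᵥ v = μ • v → μ = 0 ∧ ∃ c : ℝ, 0 < c ∧ v = c • xt := by
    intro v μ hv hveq
    have hAv : A *ᵥ v = (t + μ) • v := by
      rw [hAdef, Matrix.add_mulVec, Matrix.smul_mulVec, Matrix.one_mulVec, hveq]
      exact (add_smul t μ v).symm
    have hθpos : 0 < t + μ := by
      set i : Fin n := ⟨0, hn⟩
      have h1 : 0 < (A *ᵥ v) i := by
        rw [Matrix.mulVec, dotProduct]
        refine Finset.sum_pos' (fun l _ => mul_nonneg (hAnn i l) (hv l).le) ?_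
        exact ⟨i, Finset.mem_univ i, mul_pos (hAdiag i) (hv i)⟩
      rw [hAv] at h1
      simp only [Pi.smul_apply, smul_eq_mul] at h1
      nlinarith [hv i]
    rcases eig_compare hn hAnn hmne hpos hxpos hv htpos hθpos hAxt hAv with
      ⟨c, hc, hvcx, hba⟩ | hlt
    · exact ⟨by linarith, c, hc, hvcx⟩
    · rcases eig_compare hn hAnn hmne hpos hv hxpos hθpos htpos hAv hAxt with
        ⟨c, hc, hxcv, hba⟩ | hlt'
      · linarith
      · linarith
  refine ⟨?_, part2⟩
  -- Part 1: spectral abscissa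
  set Mc : Matrix (Fin n) (Fin n) ℂ := M.map (Complex.ofReal ·) with hMcdef
  have hMc : ∀ i j, Mc i j = ((M i j : ℝ) : ℂ) := fun i j => rfl
  -- 0 is an eigenvalue
  have h0spec : (0 : ℂ) ∈ spectrum ℂ Mc := by
    rw [mem_spectrum_iff_eigen]
    refine ⟨fun i => ((xt i : ℝ) : ℂ), ?_, ?_⟩
    · intro h
      have := congrFun h ⟨0, hn⟩
      simp at this
      exact (hxpos ⟨0, hn⟩).ne' this
    · funext i
      have hcast : (Mc *ᵥ fun j => ((xt j : ℝ) : ℂ)) i = (((M *ᵥ xt) i : ℝ) : ℂ) := by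
        simp only [Matrix.mulVec, dotProduct, hMc]
        push_cast
        rfl
      rw [hcast, heq]
      simp
  have hbound : ∀ x ∈ {x : ℝ | ∃ μ ∈ spectrum ℂ Mc, x = μ.re}, x ≤ 0 := by
    rintro x ⟨μ, hμ, rfl⟩
    obtain ⟨w, hw, hweq⟩ := (mem_spectrum_iff_eigen Mc μ).mp hμ
    have hAw : ∀ i, ∑ j, ((A i j : ℝ) : ℂ) * w j = (((t : ℝ) : ℂ) + μ) * w i := by
      intro i
      have h1 : ∀ j, ((A i j : ℝ) : ℂ) = (if i = j then ((t:ℝ):ℂ) else 0) + ((M i j : ℝ):ℂ) := by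
        intro j
        rw [hA i j]
        rcases eq_or_ne i j with h | h <;> simp [h]
      have h2 : (∑ j, ((M i j : ℝ):ℂ) * w j) = μ * w i := by
        have := congrFun hweq i
        simpa [Matrix.mulVec, dotProduct, hMc, Pi.smul_apply, smul_eq_mul] using this
      calc ∑ j, ((A i j : ℝ) : ℂ) * w j
          = ∑ j, ((if i = j then ((t:ℝ):ℂ) else 0) * w j + ((M i j : ℝ):ℂ) * w j) := by
            refine Finset.sum_congr rfl fun j _ => ?_
            rw [h1 j]; ring
        _ = (∑ j, (if i = j then ((t:ℝ):ℂ) else 0) * w j) + ∑ j, ((M i j : ℝ):ℂ) * w j :=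
            Finset.sum_add_distrib
        _ = ((t:ℝ):ℂ) * w i + μ * w i := by
            rw [h2]
            congr 1
            rw [Finset.sum_eq_single i]
            · simp
            · intro j _ hj; simp [Ne.symm hj]
            · intro h; exact absurd (Finset.mem_univ i) h
        _ = (((t : ℝ) : ℂ) + μ) * w i := by ring
    have habs := abs_eig_le hn hAnn hxpos hAxt hw hAw
    have hre : ((t : ℂ) + μ).re ≤ ‖((t : ℂ) + μ)‖ := Complex.re_le_norm _
    simp only [Complex.add_re, Complex.ofReal_re] at hre
    linarith
  have h0mem : (0 : ℝ) ∈ {x : ℝ | ∃ μ ∈ spectrum ℂ Mc, x = μ.re} :=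
    ⟨0, h0spec, by simp⟩
  have hbdd : BddAbove {x : ℝ | ∃ μ ∈ spectrum ℂ Mc, x = μ.re} :=
    ⟨0, fun x hx => hbound x hx⟩
  show sSup {x : ℝ | ∃ μ ∈ spectrum ℂ Mc, x = μ.re} = 0
  exact le_antisymm (csSup_le ⟨0, h0mem⟩ hbound) (le_csSup hbdd h0mem)


end Main
end

section
/- Consider the tri-virus boundary equilibrium Jacobian: assume D¹, D², D³ are positive diagonal, B¹, B², B³ nonnegative irreducible, and x̃¹ with 0 ≪ x̃¹ ≪ 1 satisfies (−D¹ + (I − X̃¹)B¹)x̃¹ = 0. If ρ((I − X̃¹)(D²)⁻¹B²) < 1 and ρ((I − X̃¹)(D³)⁻¹B³) < 1, then the block upper triangular matrix J with diagonal blocks −D¹ + (I−X̃¹)B¹ − diag(B¹x̃¹), −D² + (I−X̃¹)B², and −D³ + (I−X̃¹)B³ is Hurwitz. -/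
open Matrix

/-- `M` is Hurwitz: all (complex) eigenvalues have negative real part. -/
def IsHurwitz {m : Type*} [Fintype m] [DecidableEq m] (M : Matrix m m ℝ) : Prop :=
  ∀ μ ∈ spectrum ℂ (M.map (Complex.ofReal ·)), μ.re < 0

open Filter Topology Finset
open scoped ENNReal NNReal

section Aux

attribute [local instance] Matrix.linftyOpNormedRing Matrix.linftyOpNormedAlgebra

lemma aux_mem_spectrum_iff {m : Type*} [Fintype m] [DecidableEq m]
    (M : Matrix m m ℂ) (μ : ℂ) :
    μ ∈ spectrum ℂ M ↔ ∃ v : m → ℂ, v ≠ 0 ∧ M *ᵥ v = μ • v := by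
  rw [spectrum.mem_iff]
  constructor
  · intro h
    have hdet : (algebraMap ℂ (Matrix m m ℂ) μ - M).det = 0 := by
      by_contra hd
      exact h ((Matrix.isUnit_iff_isUnit_det _).mpr (isUnit_iff_ne_zero.mpr hd))
    obtain ⟨v, hv0, hv⟩ := (Matrix.exists_mulVec_eq_zero_iff).mpr hdet
    refine ⟨v, hv0, ?_⟩
    rw [Algebra.algebraMap_eq_smul_one, Matrix.sub_mulVec, Matrix.smul_mulVec,
      Matrix.one_mulVec, sub_eq_zero] at hv
    exact hv.symm
  · rintro ⟨v, hv0, hv⟩ hU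
    have h0 : (algebraMap ℂ (Matrix m m ℂ) μ - M) *ᵥ v = 0 := by
      rw [Algebra.algebraMap_eq_smul_one, Matrix.sub_mulVec, Matrix.smul_mulVec,
        Matrix.one_mulVec, hv, sub_self]
    have hdet := Matrix.exists_mulVec_eq_zero_iff.mp ⟨v, hv0, h0⟩
    rw [Matrix.isUnit_iff_isUnit_det, isUnit_iff_ne_zero] at hU
    exact hU hdet

lemma aux_metzler_hurwitz {n : ℕ} (M : Matrix (Fin n) (Fin n) ℝ)
    (hoff : ∀ i j, i ≠ j → 0 ≤ M i j) (x : Fin n → ℝ) (hx : ∀ i, 0 < x i)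
    (hMx : ∀ i, (M *ᵥ x) i < 0) : IsHurwitz M := by
  intro μ hμ
  obtain ⟨v, hv0, hv⟩ := (aux_mem_spectrum_iff _ μ).mp hμ
  obtain ⟨j0, hj0'⟩ := Function.ne_iff.mp hv0
  have hj0 : v j0 ≠ 0 := by simpa using hj0'
  obtain ⟨i, -, hi⟩ := Finset.exists_max_image Finset.univ
      (fun k => ‖v k‖ / x k) ⟨j0, Finset.mem_univ j0⟩
  set c : ℝ := ‖v i‖ / x i with hc
  have hcpos : 0 < c :=
    lt_of_lt_of_le (div_pos (norm_pos_iff.mpr hj0) (hx j0)) (hi j0 (Finset.mem_univ j0))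
  have hvi : ‖v i‖ = c * x i := by
    rw [hc, div_mul_cancel₀ _ (hx i).ne']
  have hbound : ∀ j, ‖v j‖ ≤ c * x j := by
    intro j
    have := hi j (Finset.mem_univ j)
    rw [div_le_iff₀ (hx j)] at this
    linarith [this]
  have heqi : ∑ j, (M i j : ℂ) * v j = μ * v i := by
    have := congrFun hv i
    simpa [Matrix.mulVec, dotProduct, Matrix.map_apply] using this
  have hsplit : (μ - (M i i : ℂ)) * v i = ∑ j ∈ Finset.univ.erase i, (M i j : ℂ) * v j := by
    have h2 : (M i i : ℂ) * v i + ∑ j ∈ Finset.univ.erase i, (M i j : ℂ) * v j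
        = ∑ j, (M i j : ℂ) * v j :=
      Finset.add_sum_erase Finset.univ (fun j => (M i j : ℂ) * v j) (Finset.mem_univ i)
    rw [heqi] at h2
    have : ∑ j ∈ Finset.univ.erase i, (M i j : ℂ) * v j = μ * v i - (M i i : ℂ) * v i := by
      linear_combination h2
    rw [this]; ring
  have hsum : ∑ j ∈ Finset.univ.erase i, M i j * x j = (M *ᵥ x) i - M i i * x i := by
    have h2 : M i i * x i + ∑ j ∈ Finset.univ.erase i, M i j * x j
        = ∑ j, M i j * x j :=
      Finset.add_sum_erase Finset.univ (fun j => M i j * x j) (Finset.mem_univ i)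
    have h3 : (M *ᵥ x) i = ∑ j, M i j * x j := rfl
    rw [h3]; linarith
  have key : ‖μ - (M i i : ℂ)‖ * (c * x i) < (-(M i i)) * (c * x i) := by
    calc ‖μ - (M i i : ℂ)‖ * (c * x i)
        = ‖(μ - (M i i : ℂ)) * v i‖ := by rw [norm_mul, hvi]
      _ = ‖∑ j ∈ Finset.univ.erase i, (M i j : ℂ) * v j‖ := by rw [hsplit]
      _ ≤ ∑ j ∈ Finset.univ.erase i, ‖(M i j : ℂ) * v j‖ :=
          norm_sum_le _ _
      _ = ∑ j ∈ Finset.univ.erase i, M i j * ‖v j‖ := by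
          refine Finset.sum_congr rfl fun j hj => ?_
          rw [norm_mul, Complex.norm_real, Real.norm_eq_abs,
            abs_of_nonneg (hoff i j (Ne.symm (Finset.mem_erase.mp hj).1))]
      _ ≤ ∑ j ∈ Finset.univ.erase i, M i j * (c * x j) := by
          refine Finset.sum_le_sum fun j hj => ?_
          exact mul_le_mul_of_nonneg_left (hbound j)
            (hoff i j (Ne.symm (Finset.mem_erase.mp hj).1))
      _ = c * ∑ j ∈ Finset.univ.erase i, M i j * x j := by
          rw [Finset.mul_sum]; exact Finset.sum_congr rfl fun j _ => by ring
      _ < (-(M i i)) * (c * x i) := by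
          rw [hsum]
          have h4 := hMx i
          nlinarith [hcpos, hx i]
  have h5 : ‖μ - (M i i : ℂ)‖ < -(M i i) :=
    lt_of_mul_lt_mul_right key (mul_pos hcpos (hx i)).le
  have h6 : (μ - (M i i : ℂ)).re ≤ ‖μ - (M i i : ℂ)‖ := Complex.re_le_norm _
  have h7 : (μ - (M i i : ℂ)).re = μ.re - M i i := by simp
  linarith

lemma aux_specRad_bddAbove {n : ℕ} (M : Matrix (Fin n) (Fin n) ℝ) :
    BddAbove {x : ℝ | ∃ μ ∈ spectrum ℂ (M.map (Complex.ofReal ·)), x = ‖μ‖} := by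
  have h : {x : ℝ | ∃ μ ∈ spectrum ℂ (M.map (Complex.ofReal ·)), x = ‖μ‖}
      = (fun μ : ℂ => ‖μ‖) '' spectrum ℂ (M.map (Complex.ofReal ·)) := by
    ext x
    constructor
    · rintro ⟨μ, hμ, rfl⟩; exact ⟨μ, hμ, rfl⟩
    · rintro ⟨μ, hμ, rfl⟩; exact ⟨μ, hμ, rfl⟩
  rw [h]
  exact ((Matrix.finite_spectrum _).image _).bddAbove

lemma aux_pow_tendsto {n : ℕ} (A : Matrix (Fin n) (Fin n) ℝ) (h : specRad A < 1)
    (i j : Fin n) : Tendsto (fun m => (A ^ m) i j) atTop (𝓝 0) := by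
  set A' : Matrix (Fin n) (Fin n) ℂ := A.map (Complex.ofReal ·) with hA'
  have hsr : spectralRadius ℂ A' < 1 := by
    have hle : spectralRadius ℂ A' ≤ ENNReal.ofReal (specRad A) := by
      rw [spectralRadius]
      refine iSup₂_le fun μ hμ => ?_
      have h1 : ‖μ‖ ≤ specRad A :=
        le_csSup (aux_specRad_bddAbove A) ⟨μ, hμ, rfl⟩
      have h2 : (‖μ‖₊ : ℝ≥0∞) = ENNReal.ofReal (‖μ‖) := by
        rw [ofReal_norm, enorm_eq_nnnorm]
      rw [h2]
      exact ENNReal.ofReal_le_ofReal h1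
    exact lt_of_le_of_lt hle (by rwa [ENNReal.ofReal_lt_one])
  obtain ⟨r, hr1, hr2⟩ := ENNReal.lt_iff_exists_nnreal_btwn.mp hsr
  have hgel := spectrum.pow_nnnorm_pow_one_div_tendsto_nhds_spectralRadius A'
  have hev : ∀ᶠ m : ℕ in atTop, (‖A' ^ m‖₊ : ℝ≥0∞) ^ (1 / (m : ℝ)) < (r : ℝ≥0∞) :=
    hgel.eventually_lt_const hr1
  have hbnd : ∀ᶠ m : ℕ in atTop, ‖(A ^ m) i j‖ ≤ (r : ℝ) ^ m := by
    filter_upwards [hev, eventually_ge_atTop 1] with m hm hm1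
    have hmne : (m : ℝ) ≠ 0 := by positivity
    have hx : (‖A' ^ m‖₊ : ℝ≥0∞) ≤ (r : ℝ≥0∞) ^ (m : ℕ) := by
      have h0 : ((‖A' ^ m‖₊ : ℝ≥0∞) ^ (1 / (m : ℝ))) ^ (m : ℝ)
          ≤ (r : ℝ≥0∞) ^ (m : ℝ) := ENNReal.rpow_le_rpow hm.le (by positivity)
      rwa [← ENNReal.rpow_mul, one_div, inv_mul_cancel₀ hmne, ENNReal.rpow_one,
        ENNReal.rpow_natCast] at h0
    have hx2 : ‖A' ^ m‖₊ ≤ r ^ m := by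
      rw [← ENNReal.coe_pow, ENNReal.coe_le_coe] at hx
      exact hx
    have hentry : ‖(A' ^ m) i j‖₊ ≤ ‖A' ^ m‖₊ := by
      rw [Matrix.linfty_opNNNorm_def]
      calc ‖(A' ^ m) i j‖₊ ≤ ∑ k, ‖(A' ^ m) i k‖₊ :=
            Finset.single_le_sum (f := fun k => ‖(A' ^ m) i k‖₊)
              (fun _ _ => zero_le) (Finset.mem_univ j)
        _ ≤ _ := Finset.le_sup (f := fun i => ∑ k, ‖(A' ^ m) i k‖₊) (Finset.mem_univ i)
    have hmap : (A' ^ m) i j = ((A ^ m) i j : ℂ) := by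
      have : A' ^ m = (Complex.ofRealHom.mapMatrix (A ^ m) :
          Matrix (Fin n) (Fin n) ℂ) := by
        rw [map_pow]; rfl
      rw [this]; rfl
    have : ‖(A ^ m) i j‖ ≤ (r : ℝ) ^ m := by
      have h3 : ‖((A ^ m) i j : ℂ)‖₊ ≤ r ^ m := by rw [← hmap]; exact hentry.trans hx2
      have h4 : ‖((A ^ m) i j : ℂ)‖ ≤ ((r ^ m : ℝ≥0) : ℝ) := h3
      simpa [Complex.norm_real] using h4
    exact this
  have hr3 : (r : ℝ) < 1 := by exact_mod_cast ENNReal.coe_lt_one_iff.mp hr2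
  exact squeeze_zero_norm' hbnd
    (tendsto_pow_atTop_nhds_zero_of_lt_one r.coe_nonneg hr3)

lemma aux_pow_nonneg {n : ℕ} (A : Matrix (Fin n) (Fin n) ℝ) (hA : ∀ i j, 0 ≤ A i j) :
    ∀ (m : ℕ) (i j : Fin n), 0 ≤ (A ^ m) i j := by
  intro m
  induction m with
  | zero =>
    intro i j
    rw [pow_zero]
    by_cases h : i = j <;> simp [Matrix.one_apply, h]
  | succ m ih =>
    intro i j
    rw [pow_succ, Matrix.mul_apply]
    exact Finset.sum_nonneg fun k _ => mul_nonneg (ih i k) (hA k j)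

lemma aux_exists_pos {n : ℕ} (A : Matrix (Fin n) (Fin n) ℝ) (hA : ∀ i j, 0 ≤ A i j)
    (h : specRad A < 1) : ∃ x : Fin n → ℝ, (∀ i, 0 < x i) ∧ ∀ i, (A *ᵥ x) i < x i := by
  have hdet : ((1 : Matrix (Fin n) (Fin n) ℝ) - A).det ≠ 0 := by
    intro h0
    have hmap : (((1 : Matrix (Fin n) (Fin n) ℝ) - A).map (Complex.ofReal ·))
        = 1 - A.map (Complex.ofReal ·) := by
      change Complex.ofRealHom.mapMatrix ((1 : Matrix (Fin n) (Fin n) ℝ) - A) = _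
      rw [_root_.map_sub, _root_.map_one]
      rfl
    have hC : ((1 : Matrix (Fin n) (Fin n) ℂ) - A.map (Complex.ofReal ·)).det = 0 := by
      rw [← hmap]
      have key := RingHom.map_det Complex.ofRealHom ((1 : Matrix (Fin n) (Fin n) ℝ) - A)
      rw [h0, map_zero] at key
      exact key.symm
    obtain ⟨v, hv0, hv⟩ := Matrix.exists_mulVec_eq_zero_iff.mpr hC
    have hAv : (A.map (Complex.ofReal ·)) *ᵥ v = (1 : ℂ) • v := by
      rw [Matrix.sub_mulVec, Matrix.one_mulVec, sub_eq_zero] at hv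
      rw [← hv, one_smul]
    have h1 : (1 : ℂ) ∈ spectrum ℂ (A.map (Complex.ofReal ·)) :=
      (aux_mem_spectrum_iff _ _).mpr ⟨v, hv0, hAv⟩
    have h2 : (1 : ℝ) ≤ specRad A :=
      le_csSup (aux_specRad_bddAbove A) ⟨1, h1, by simp⟩
    linarith
  set u : Fin n → ℝ := fun _ => 1 with hu
  set x : Fin n → ℝ := ((1 : Matrix (Fin n) (Fin n) ℝ) - A)⁻¹ *ᵥ u with hxdef
  have hxu : ((1 : Matrix (Fin n) (Fin n) ℝ) - A) *ᵥ x = u := by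
    rw [hxdef, Matrix.mulVec_mulVec, Matrix.mul_nonsing_inv _ (isUnit_iff_ne_zero.mpr hdet),
      Matrix.one_mulVec]
  have hrec : ∀ i, x i = 1 + (A *ᵥ x) i := by
    intro i
    have h1 := congrFun hxu i
    rw [Matrix.sub_mulVec, Matrix.one_mulVec] at h1
    have h2 : x i - (A *ᵥ x) i = 1 := h1
    linarith
  have hrecv : x = u + A *ᵥ x := by
    funext i
    simpa using hrec i
  have hiter : ∀ (m : ℕ) (i : Fin n),
      x i = (∑ k ∈ Finset.range m, ((A ^ k) *ᵥ u) i) + ((A ^ m) *ᵥ x) i := by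
    intro m
    induction m with
    | zero => intro i; simp [Matrix.one_mulVec]
    | succ m ih =>
      intro i
      have hAx : (A ^ m) *ᵥ x = (A ^ m) *ᵥ u + (A ^ (m + 1)) *ᵥ x := by
        conv_lhs => rw [hrecv]
        rw [Matrix.mulVec_add, Matrix.mulVec_mulVec, ← pow_succ]
      rw [ih i, hAx, Finset.sum_range_succ]
      simp [add_assoc]
  have hx0 : ∀ i, 0 ≤ x i := by
    intro i
    have hmono : ∀ m : ℕ, ((A ^ m) *ᵥ x) i ≤ x i := by
      intro m
      have hS : 0 ≤ ∑ k ∈ Finset.range m, ((A ^ k) *ᵥ u) i := by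
        refine Finset.sum_nonneg fun k _ => ?_
        show 0 ≤ ∑ l, (A ^ k) i l * u l
        refine Finset.sum_nonneg fun l _ => ?_
        exact mul_nonneg (aux_pow_nonneg A hA k i l) (by norm_num [hu])
      linarith [hiter m i]
    have hlim : Tendsto (fun m => ((A ^ m) *ᵥ x) i) atTop (𝓝 0) := by
      have h1 : Tendsto (fun m => ∑ j, (A ^ m) i j * x j) atTop (𝓝 (∑ j : Fin n, 0)) := by
        refine tendsto_finset_sum _ fun j _ => ?_
        simpa using (aux_pow_tendsto A h i j).mul_const (x j)
      simpa [Matrix.mulVec, dotProduct] using h1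
    exact le_of_tendsto hlim (Eventually.of_forall hmono)
  refine ⟨x, ?_, ?_⟩
  · intro i
    have h1 : 0 ≤ (A *ᵥ x) i := by
      show 0 ≤ ∑ j, A i j * x j
      exact Finset.sum_nonneg fun j _ => mul_nonneg (hA i j) (hx0 j)
    have := hrec i
    linarith
  · intro i
    have := hrec i
    linarith

lemma aux_spectrum_block {n : ℕ} (J : Matrix (Fin 3 × Fin n) (Fin 3 × Fin n) ℝ)
    (hlow : ∀ (a b : Fin 3) (i j : Fin n), b < a → J (a, i) (b, j) = 0)
    {μ : ℂ} (hμ : μ ∈ spectrum ℂ (J.map (Complex.ofReal ·))) :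
    ∃ a : Fin 3, μ ∈ spectrum ℂ
      ((Matrix.of fun i j => J (a, i) (a, j)).map (Complex.ofReal ·)) := by
  classical
  obtain ⟨v, hv0, hv⟩ := (aux_mem_spectrum_iff _ μ).mp hμ
  obtain ⟨p0, hp0'⟩ := Function.ne_iff.mp hv0
  have hp0 : v p0 ≠ 0 := by simpa using hp0'
  set T : Finset (Fin 3) := Finset.univ.filter (fun b => ∃ i, v (b, i) ≠ 0) with hT
  have hTne : T.Nonempty := by
    refine ⟨p0.1, ?_⟩
    simp only [hT, Finset.mem_filter, Finset.mem_univ, true_and]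
    exact ⟨p0.2, by simpa using hp0⟩
  set a := T.max' hTne with ha
  have haT : a ∈ T := T.max'_mem hTne
  obtain ⟨i0, hi0⟩ : ∃ i, v (a, i) ≠ 0 := by
    simpa [hT, Finset.mem_filter] using haT
  have hgt : ∀ b, a < b → ∀ j, v (b, j) = 0 := by
    intro b hb j
    by_contra hbj
    have hbT : b ∈ T := by
      simp only [hT, Finset.mem_filter, Finset.mem_univ, true_and]
      exact ⟨j, hbj⟩
    exact absurd (T.le_max' b hbT) (not_le.mpr hb)
  refine ⟨a, (aux_mem_spectrum_iff _ μ).mpr ⟨fun i => v (a, i), ?_, ?_⟩⟩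
  · intro h0
    exact hi0 (congrFun h0 i0)
  · funext i
    have hJ := congrFun hv (a, i)
    have hL : ((J.map (Complex.ofReal ·)) *ᵥ v) (a, i)
        = ∑ b : Fin 3, ∑ j : Fin n, (J (a, i) (b, j) : ℂ) * v (b, j) := by
      rw [Matrix.mulVec, dotProduct, Fintype.sum_prod_type]
      rfl
    have hsingle : ∑ b : Fin 3, ∑ j : Fin n, (J (a, i) (b, j) : ℂ) * v (b, j)
        = ∑ j : Fin n, (J (a, i) (a, j) : ℂ) * v (a, j) := by
      refine Finset.sum_eq_single a (fun b _ hba => ?_) (fun hne => absurd (Finset.mem_univ a) hne)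
      refine Finset.sum_eq_zero fun j _ => ?_
      rcases lt_or_gt_of_ne hba with hlt | hgt'
      · rw [hlow a b i j hlt, Complex.ofReal_zero, zero_mul]
      · rw [hgt b hgt' j, mul_zero]
    have hR : (μ • v) (a, i) = μ * v (a, i) := rfl
    rw [hL, hsingle, hR] at hJ
    simpa [Matrix.mulVec, dotProduct] using hJ

lemma aux_diag_mulVec {n : ℕ} (f y : Fin n → ℝ) (i : Fin n) :
    (Matrix.diagonal f *ᵥ y) i = f i * y i := by
  show ∑ j, Matrix.diagonal f i j * y j = f i * y i
  rw [Finset.sum_eq_single i (fun j _ hj => by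
    rw [Matrix.diagonal_apply_ne' _ hj, zero_mul]) (fun hne => absurd (Finset.mem_univ i) hne)]
  rw [Matrix.diagonal_apply_eq]

lemma aux_one_sub_diag {n : ℕ} (x1 : Fin n → ℝ) :
    (1 : Matrix (Fin n) (Fin n) ℝ) - Matrix.diagonal x1
      = Matrix.diagonal (fun i => 1 - x1 i) := by
  ext i j
  by_cases h : i = j <;>
    simp [Matrix.sub_apply, Matrix.diagonal_apply, Matrix.one_apply, h]

lemma aux_block {n : ℕ} (d : Fin n → ℝ) (hd : ∀ i, 0 < d i)
    (B : Matrix (Fin n) (Fin n) ℝ) (hB : ∀ i j, 0 ≤ B i j)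
    (x1 : Fin n → ℝ) (hx1 : ∀ i, 0 < x1 i ∧ x1 i < 1)
    (hr : specRad (((1 : Matrix (Fin n) (Fin n) ℝ) - Matrix.diagonal x1) *
      (Matrix.diagonal d)⁻¹ * B) < 1) :
    IsHurwitz (-(Matrix.diagonal d) +
      ((1 : Matrix (Fin n) (Fin n) ℝ) - Matrix.diagonal x1) * B) := by
  have hdinv : (Matrix.diagonal d)⁻¹ = Matrix.diagonal (fun i => (d i)⁻¹) := by
    apply Matrix.inv_eq_right_inv
    rw [Matrix.diagonal_mul_diagonal]
    have : (fun i => d i * (d i)⁻¹) = fun _ : Fin n => (1 : ℝ) := by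
      funext i; exact mul_inv_cancel₀ (hd i).ne'
    rw [this, Matrix.diagonal_one]
  set A := (((1 : Matrix (Fin n) (Fin n) ℝ) - Matrix.diagonal x1) *
      (Matrix.diagonal d)⁻¹ * B) with hA
  have hAe : ∀ i j, A i j = (1 - x1 i) * ((d i)⁻¹ * B i j) := by
    intro i j
    rw [hA, aux_one_sub_diag, hdinv, Matrix.diagonal_mul_diagonal, Matrix.diagonal_mul]
    ring
  have hApos : ∀ i j, 0 ≤ A i j := by
    intro i j
    rw [hAe]
    exact mul_nonneg (by linarith [(hx1 i).2])
      (mul_nonneg (inv_nonneg.mpr (hd i).le) (hB i j))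
  obtain ⟨x, hxpos, hxlt⟩ := aux_exists_pos A hApos hr
  refine aux_metzler_hurwitz _ ?_ x hxpos ?_
  · intro i j hij
    have hentry : (-(Matrix.diagonal d) +
        ((1 : Matrix (Fin n) (Fin n) ℝ) - Matrix.diagonal x1) * B) i j
        = (1 - x1 i) * B i j := by
      rw [Matrix.add_apply, Matrix.neg_apply, Matrix.diagonal_apply_ne _ hij,
        aux_one_sub_diag, Matrix.diagonal_mul, neg_zero, zero_add]
    rw [hentry]
    exact mul_nonneg (by linarith [(hx1 i).2]) (hB i j)
  · intro i
    have hAx : (A *ᵥ x) i = (1 - x1 i) * ((d i)⁻¹ * (B *ᵥ x) i) := by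
      show ∑ j, A i j * x j = _
      have h1 : ∀ j, A i j * x j = (1 - x1 i) * ((d i)⁻¹ * (B i j * x j)) := by
        intro j; rw [hAe]; ring
      rw [Finset.sum_congr rfl fun j _ => h1 j, ← Finset.mul_sum, ← Finset.mul_sum]
      rfl
    have hkey := hxlt i
    rw [hAx] at hkey
    have h3 : d i * ((1 - x1 i) * ((d i)⁻¹ * (B *ᵥ x) i)) = (1 - x1 i) * (B *ᵥ x) i := by
      rw [show d i * ((1 - x1 i) * ((d i)⁻¹ * (B *ᵥ x) i))
          = (d i * (d i)⁻¹) * ((1 - x1 i) * (B *ᵥ x) i) from by ring,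
        mul_inv_cancel₀ (hd i).ne', one_mul]
    have h2 : (1 - x1 i) * (B *ᵥ x) i < d i * x i := by
      have := mul_lt_mul_of_pos_left hkey (hd i)
      rwa [h3] at this
    have hMx : ((-(Matrix.diagonal d) +
        ((1 : Matrix (Fin n) (Fin n) ℝ) - Matrix.diagonal x1) * B) *ᵥ x) i
        = -(d i * x i) + (1 - x1 i) * (B *ᵥ x) i := by
      rw [Matrix.add_mulVec, Matrix.neg_mulVec, aux_one_sub_diag,
        ← Matrix.mulVec_mulVec, Pi.add_apply, Pi.neg_apply, aux_diag_mulVec,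
        aux_diag_mulVec]
    rw [hMx]
    linarith

end Aux

/-- If `x̃¹` is the single-virus endemic equilibrium of virus 1 and
`ρ((I − X̃¹)(D²)⁻¹B²) < 1`, `ρ((I − X̃¹)(D³)⁻¹B³) < 1`, then the block upper
triangular Jacobian with diagonal blocks `−D¹ + (I−X̃¹)B¹ − diag(B¹x̃¹)`,
`−D² + (I−X̃¹)B²`, `−D³ + (I−X̃¹)B³` is Hurwitz. -/
theorem stmt8 (n : ℕ) (hn : 0 < n)
    (d1 d2 d3 : Fin n → ℝ) (hd1 : ∀ i, 0 < d1 i) (hd2 : ∀ i, 0 < d2 i)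
    (hd3 : ∀ i, 0 < d3 i)
    (B1 B2 B3 : Matrix (Fin n) (Fin n) ℝ)
    (hB1 : IrredNonneg B1) (hB2 : IrredNonneg B2) (hB3 : IrredNonneg B3)
    (x1 : Fin n → ℝ) (hx1 : ∀ i, 0 < x1 i ∧ x1 i < 1)
    (heq : (-(Matrix.diagonal d1) +
      ((1 : Matrix (Fin n) (Fin n) ℝ) - Matrix.diagonal x1) * B1) *ᵥ x1 = 0)
    (hr2 : specRad (((1 : Matrix (Fin n) (Fin n) ℝ) - Matrix.diagonal x1) *
      (Matrix.diagonal d2)⁻¹ * B2) < 1)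
    (hr3 : specRad (((1 : Matrix (Fin n) (Fin n) ℝ) - Matrix.diagonal x1) *
      (Matrix.diagonal d3)⁻¹ * B3) < 1)
    (J : Matrix (Fin 3 × Fin n) (Fin 3 × Fin n) ℝ)
    (hlow : ∀ (a b : Fin 3) (i j : Fin n), b < a → J (a, i) (b, j) = 0)
    (hdiag1 : ∀ i j, J (0, i) (0, j) =
      (-(Matrix.diagonal d1) +
        ((1 : Matrix (Fin n) (Fin n) ℝ) - Matrix.diagonal x1) * B1
        - Matrix.diagonal (B1 *ᵥ x1)) i j)
    (hdiag2 : ∀ i j, J (1, i) (1, j) =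
      (-(Matrix.diagonal d2) +
        ((1 : Matrix (Fin n) (Fin n) ℝ) - Matrix.diagonal x1) * B2) i j)
    (hdiag3 : ∀ i j, J (2, i) (2, j) =
      (-(Matrix.diagonal d3) +
        ((1 : Matrix (Fin n) (Fin n) ℝ) - Matrix.diagonal x1) * B3) i j) :
    IsHurwitz J := by
  have hM2 := aux_block d2 hd2 B2 hB2.1 x1 hx1 hr2
  have hM3 := aux_block d3 hd3 B3 hB3.1 x1 hx1 hr3
  set M1 := -(Matrix.diagonal d1) +
      ((1 : Matrix (Fin n) (Fin n) ℝ) - Matrix.diagonal x1) * B1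
      - Matrix.diagonal (B1 *ᵥ x1) with hM1def
  have hM1 : IsHurwitz M1 := by
    refine aux_metzler_hurwitz _ ?_ x1 (fun i => (hx1 i).1) ?_
    · intro i j hij
      have hentry : M1 i j = (1 - x1 i) * B1 i j := by
        rw [hM1def, Matrix.sub_apply, Matrix.add_apply, Matrix.neg_apply,
          Matrix.diagonal_apply_ne _ hij, Matrix.diagonal_apply_ne _ hij,
          aux_one_sub_diag, Matrix.diagonal_mul]
        ring
      rw [hentry]
      exact mul_nonneg (by linarith [(hx1 i).2]) (hB1.1 i j)
    · intro i
      have hrow : ∃ j, 0 < B1 i j := by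
        by_contra hcon
        push_neg at hcon
        obtain ⟨k, hk⟩ := hB1.2 i i
        have hz : (B1 ^ (k + 1)) i i = 0 := by
          rw [pow_succ', Matrix.mul_apply]
          refine Finset.sum_eq_zero fun l _ => ?_
          have h0 : B1 i l = 0 := le_antisymm (hcon l) (hB1.1 i l)
          rw [h0, zero_mul]
        rw [hz] at hk
        exact lt_irrefl 0 hk
      have he : 0 < (B1 *ᵥ x1) i := by
        show 0 < ∑ j, B1 i j * x1 j
        obtain ⟨j0, hj0⟩ := hrow
        exact Finset.sum_pos' (fun j _ => mul_nonneg (hB1.1 i j) (hx1 j).1.le)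
          ⟨j0, Finset.mem_univ j0, mul_pos hj0 (hx1 j0).1⟩
      have hval : (M1 *ᵥ x1) i = 0 - (B1 *ᵥ x1) i * x1 i := by
        rw [hM1def, Matrix.sub_mulVec, heq, Pi.sub_apply, aux_diag_mulVec]
        rfl
      rw [hval]
      nlinarith [he, (hx1 i).1]
  intro μ hμ
  obtain ⟨a, ha⟩ := aux_spectrum_block J hlow hμ
  fin_cases a
  · refine hM1 μ ?_
    have hEq : (Matrix.of fun (i j : Fin n) => J ((0 : Fin 3), i) ((0 : Fin 3), j)) = M1 := by
      ext i j
      rw [hM1def]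
      exact hdiag1 i j
    rw [← hEq]
    exact ha
  · refine hM2 μ ?_
    have hEq : (Matrix.of fun (i j : Fin n) => J ((1 : Fin 3), i) ((1 : Fin 3), j))
        = -(Matrix.diagonal d2) +
          ((1 : Matrix (Fin n) (Fin n) ℝ) - Matrix.diagonal x1) * B2 := by
      ext i j
      exact hdiag2 i j
    rw [← hEq]
    exact ha
  · refine hM3 μ ?_
    have hEq : (Matrix.of fun (i j : Fin n) => J ((2 : Fin 3), i) ((2 : Fin 3), j))
        = -(Matrix.diagonal d3) +
          ((1 : Matrix (Fin n) (Fin n) ℝ) - Matrix.diagonal x1) * B3 := by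
      ext i j
      exact hdiag3 i j
    rw [← hEq]
    exact ha
end

section
/- Suppose D^k are positive diagonal and B^k are nonnegative irreducible matrices for k = 1, 2, and (D²)⁻¹B² > (D¹)⁻¹B¹ (entrywise ≥ with at least one strict inequality). Then there exists no pair of vectors x̄¹, x̄² with 0 ≪ x̄¹, x̄² ≪ 1 and x̄¹ + x̄² ≪ 1 satisfying simultaneously 0 = (−D¹ + (I − X̄¹ − X̄²)B¹)x̄¹ and 0 = (−D² + (I − X̄¹ − X̄²)B²)x̄². -/
open Matrix

/-- `A > B` entrywise: `A ≥ B` with at least one strict inequality. -/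
def MatGt {n : ℕ} (A B : Matrix (Fin n) (Fin n) ℝ) : Prop :=
  (∀ i j, B i j ≤ A i j) ∧ A ≠ B

/-!
Write `C = I - X̄¹ - X̄²` (a positive diagonal matrix) and `Aᵏ = C (Dᵏ)⁻¹ Bᵏ`. The
equilibrium equations say `Aᵏ x̄ᵏ = x̄ᵏ`, and the hypotheses give `A¹ ≤ A²` entrywise with
`A²` irreducible. Let `t` be the largest scalar with `t x̄¹ ≤ x̄²`. Then `z = x̄² - t x̄¹ ≥ 0`
vanishes somewhere and `z = A² z + t (A² - A¹) x̄¹`, a sum of nonnegative vectors; so at each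
zero of `z` the whole row of `A² - A¹` vanishes and `z` vanishes at every successor of that
index in the graph of `A²`. By irreducibility `z = 0` everywhere, hence `A¹ = A²`, and
cancelling `C` contradicts `(D²)⁻¹B² ≠ (D¹)⁻¹B¹`.
-/

namespace Matrix

section Irreducible

variable {n R : Type*} [Ring R] [LinearOrder R] {A : Matrix n n R}

theorem IsIrreducible.forall_of_closed (hA : A.IsIrreducible) {P : n → Prop}
    (hP : ∀ i j, P i → 0 < A i j → P j) {i : n} (hi : P i) (j : n) : P j := by
  let := toQuiver A
  obtain ⟨p, -⟩ := hA.connected i j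
  induction p with
  | nil => exact hi
  | cons _ e ih => exact hP _ _ ih e.down

theorem IsIrreducible.diagonal_mul [Fintype n] [DecidableEq n] [IsStrictOrderedRing R]
    (hA : A.IsIrreducible) {c : n → R} (hc : ∀ i, 0 < c i) :
    (diagonal c * A).IsIrreducible := by
  have hquiver : toQuiver (diagonal c * A) = toQuiver A := by
    unfold toQuiver
    congr
    funext i j
    rw [Matrix.diagonal_mul, mul_pos_iff_of_pos_left (hc i)]
  refine ⟨fun i j => ?_, ?_⟩
  · rw [Matrix.diagonal_mul]
    exact mul_nonneg (hc i).le (hA.nonneg i j)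
  · rw [hquiver]
    exact hA.connected

end Irreducible

section Diagonal

variable {n K : Type*} [Fintype n] [DecidableEq n] [Field K]

theorem inv_diagonal_of_ne_zero {d : n → K} (hd : ∀ i, d i ≠ 0) :
    (diagonal d)⁻¹ = diagonal d⁻¹ := by
  refine inv_eq_right_inv ?_
  rw [diagonal_mul_diagonal, ← diagonal_one]
  exact congrArg diagonal (funext fun i => mul_inv_cancel₀ (hd i))

theorem diagonal_mul_cancel_left {c : n → K} (hc : ∀ i, c i ≠ 0) {A B : Matrix n n K}
    (h : diagonal c * A = diagonal c * B) : A = B := by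
  ext i j
  simpa only [diagonal_mul, mul_right_inj' (hc i)] using congrFun (congrFun h i) j

theorem mulVec_eq_self_of_neg_diagonal_add_mulVec_eq_zero {d c : n → K} (hd : ∀ i, d i ≠ 0)
    {B : Matrix n n K} {x : n → K} (h : (-diagonal d + diagonal c * B) *ᵥ x = 0) :
    (diagonal c * (diagonal d⁻¹ * B)) *ᵥ x = x := by
  funext i
  have hi := congrFun h i
  simp only [add_mulVec, neg_mulVec, ← mulVec_mulVec, mulVec_diagonal, Pi.add_apply,
    Pi.neg_apply, Pi.zero_apply, Pi.inv_apply] at hi ⊢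
  field_simp [hd i]
  linear_combination hi

end Diagonal

section LinearOrderedField

variable {n K : Type*} [Fintype n] [Field K] [LinearOrder K] [IsStrictOrderedRing K]

theorem eq_of_le_of_isIrreducible_of_mulVec_eq_self {A A' : Matrix n n K}
    (hle : ∀ i j, A i j ≤ A' i j) (hA' : A'.IsIrreducible) {x y : n → K}
    (hx : ∀ i, 0 < x i) (hy : ∀ i, 0 < y i) (hAx : A *ᵥ x = x) (hAy : A' *ᵥ y = y) :
    A = A' := by
  rcases isEmpty_or_nonempty n with hn | hn
  · ext i; exact isEmptyElim i
  obtain ⟨i₀, hi₀⟩ := Finite.exists_min fun i => y i / x i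
  set t := y i₀ / x i₀
  have ht : 0 < t := div_pos (hy i₀) (hx i₀)
  set z := y - t • x
  have hz : ∀ j, 0 ≤ z j := fun j => sub_nonneg.2 ((le_div_iff₀ (hx j)).1 (hi₀ j))
  have hzi₀ : z i₀ = 0 := by
    simp only [z, t, Pi.sub_apply, Pi.smul_apply, smul_eq_mul, div_mul_cancel₀ _ (hx i₀).ne',
      sub_self]
  have hdecomp : ∀ i, z i = ∑ j, (A' i j * z j + t * ((A' i j - A i j) * x j)) := by
    intro i
    calc z i = (A' *ᵥ y) i - t * (A *ᵥ x) i := by rw [hAx, hAy]; rfl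
      _ = _ := by
        simp only [mulVec, dotProduct, Finset.mul_sum, ← Finset.sum_sub_distrib]
        refine Finset.sum_congr rfl fun j _ => ?_
        simp only [z, Pi.sub_apply, Pi.smul_apply, smul_eq_mul]
        ring
  have hzterm : ∀ i j, 0 ≤ A' i j * z j := fun i j => mul_nonneg (hA'.nonneg i j) (hz j)
  have hxterm : ∀ i j, 0 ≤ t * ((A' i j - A i j) * x j) := fun i j =>
    mul_nonneg ht.le (mul_nonneg (sub_nonneg.2 (hle i j)) (hx j).le)
  have hrow : ∀ i, z i = 0 → ∀ j, A' i j * z j = 0 ∧ t * ((A' i j - A i j) * x j) = 0 :=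
    fun i hi j => (add_eq_zero_iff_of_nonneg (hzterm i j) (hxterm i j)).1 <|
      (Finset.sum_eq_zero_iff_of_nonneg fun j _ => add_nonneg (hzterm i j) (hxterm i j)).1
        ((hdecomp i).symm.trans hi) j (Finset.mem_univ j)
  have hzero : ∀ j, z j = 0 := hA'.forall_of_closed
    (fun i j hi hij => (mul_eq_zero.1 (hrow i hi j).1).resolve_left hij.ne') hzi₀
  ext i j
  have hij := (hrow i (hzero i) j).2
  simp only [mul_eq_zero, ht.ne', (hx j).ne', sub_eq_zero, false_or, or_false] at hij
  exact hij.symm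

end LinearOrderedField

end Matrix

theorem IrredNonneg.isIrreducible {n : ℕ} {B : Matrix (Fin n) (Fin n) ℝ} (hB : IrredNonneg B) :
    B.IsIrreducible :=
  (isIrreducible_iff_exists_pow_pos hB.1).2 fun i j =>
    let ⟨k, hk⟩ := hB.2 i j
    ⟨k + 1, k.succ_pos, hk⟩

theorem stmt9_general (n : ℕ) (d1 d2 : Fin n → ℝ) (hd1 : ∀ i, 0 < d1 i)
    (hd2 : ∀ i, 0 < d2 i)
    (B1 B2 : Matrix (Fin n) (Fin n) ℝ)
    (hB2 : IrredNonneg B2)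
    (hlt : MatGt ((Matrix.diagonal d2)⁻¹ * B2) ((Matrix.diagonal d1)⁻¹ * B1)) :
    ¬ ∃ x1 x2 : Fin n → ℝ,
      (∀ i, 0 < x1 i ∧ x1 i < 1) ∧ (∀ i, 0 < x2 i ∧ x2 i < 1) ∧
      (∀ i, x1 i + x2 i < 1) ∧
      (-(Matrix.diagonal d1) +
        ((1 : Matrix (Fin n) (Fin n) ℝ) - Matrix.diagonal x1
          - Matrix.diagonal x2) * B1) *ᵥ x1 = 0 ∧
      (-(Matrix.diagonal d2) +
        ((1 : Matrix (Fin n) (Fin n) ℝ) - Matrix.diagonal x1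
          - Matrix.diagonal x2) * B2) *ᵥ x2 = 0 := by
  rintro ⟨x1, x2, hx1, hx2, hsum, heq1, heq2⟩
  set c : Fin n → ℝ := 1 - x1 - x2
  have hc : ∀ i, 0 < c i := fun i => by
    simp only [c, Pi.sub_apply, Pi.one_apply]
    linarith [hsum i]
  have hC : (1 : Matrix (Fin n) (Fin n) ℝ) - diagonal x1 - diagonal x2 = diagonal c := by
    rw [← diagonal_one', diagonal_sub, diagonal_sub]; rfl
  rw [hC] at heq1 heq2
  rw [inv_diagonal_of_ne_zero fun i => (hd1 i).ne', inv_diagonal_of_ne_zero fun i => (hd2 i).ne']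
    at hlt
  have hA2 : (diagonal c * (diagonal d2⁻¹ * B2)).IsIrreducible :=
    (hB2.isIrreducible.diagonal_mul fun i => inv_pos.2 (hd2 i)).diagonal_mul hc
  have hle : ∀ i j, (diagonal c * (diagonal d1⁻¹ * B1)) i j ≤
      (diagonal c * (diagonal d2⁻¹ * B2)) i j := fun i j => by
    rw [diagonal_mul c, diagonal_mul c]
    exact mul_le_mul_of_nonneg_left (hlt.1 i j) (hc i).le
  have hA : diagonal c * (diagonal d1⁻¹ * B1) = diagonal c * (diagonal d2⁻¹ * B2) :=
    eq_of_le_of_isIrreducible_of_mulVec_eq_self hle hA2 (fun i => (hx1 i).1) (fun i => (hx2 i).1)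
      (mulVec_eq_self_of_neg_diagonal_add_mulVec_eq_zero (fun i => (hd1 i).ne') heq1)
      (mulVec_eq_self_of_neg_diagonal_add_mulVec_eq_zero (fun i => (hd2 i).ne') heq2)
  exact hlt.2 (diagonal_mul_cancel_left (fun i => (hc i).ne') hA).symm

/-- If `(D²)⁻¹B² > (D¹)⁻¹B¹` entrywise, there is no coexistence equilibrium
`(x̄¹, x̄²)` with `0 ≪ x̄¹, x̄² ≪ 1` and `x̄¹ + x̄² ≪ 1`. -/
theorem stmt9 (n : ℕ) (d1 d2 : Fin n → ℝ) (hd1 : ∀ i, 0 < d1 i)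
    (hd2 : ∀ i, 0 < d2 i)
    (B1 B2 : Matrix (Fin n) (Fin n) ℝ)
    (hB1 : IrredNonneg B1) (hB2 : IrredNonneg B2)
    (hlt : MatGt ((Matrix.diagonal d2)⁻¹ * B2) ((Matrix.diagonal d1)⁻¹ * B1)) :
    ¬ ∃ x1 x2 : Fin n → ℝ,
      (∀ i, 0 < x1 i ∧ x1 i < 1) ∧ (∀ i, 0 < x2 i ∧ x2 i < 1) ∧
      (∀ i, x1 i + x2 i < 1) ∧
      (-(Matrix.diagonal d1) +
        ((1 : Matrix (Fin n) (Fin n) ℝ) - Matrix.diagonal x1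
          - Matrix.diagonal x2) * B1) *ᵥ x1 = 0 ∧
      (-(Matrix.diagonal d2) +
        ((1 : Matrix (Fin n) (Fin n) ℝ) - Matrix.diagonal x1
          - Matrix.diagonal x2) * B2) *ᵥ x2 = 0 :=
  stmt9_general n d1 d2 hd1 hd2 B1 B2 hB2 hlt
end

section
/- Let B¹ be a nonnegative irreducible matrix and z a vector with 0 ≪ z ≪ 1 satisfying (−I + (I − Z)B¹)z = 0 where Z = diag(z). Let C be a nonnegative irreducible matrix with Cz = z, and set B² = (I − Z)⁻¹C. Then for every β₁ ∈ [0,1], the point (β₁ z, (1 − β₁) z, 0) is an equilibrium of the tri-virus system with D^k = I for all k; that is, (−I + (I − β₁Z − (1−β₁)Z)B¹)(β₁ z) = 0 and (−I + (I − β₁Z − (1−β₁)Z)B²)((1−β₁) z) = 0 and the third equation holds trivially. -/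
open Matrix

/-!
Since `β Z + (1 - β) Z = Z`, both equations along the line reduce to the ones at `β = 1`
and `β = 0`. The first is the equilibrium equation of `z` itself, and in the second
`(I - Z)(I - Z)⁻¹ C = C`, so it reduces to `C z = z`.
-/

theorem sub_smul_sub_one_sub_smul {R M : Type*} [Ring R] [AddCommGroup M] [Module R M]
    (a d : M) (β : R) : a - β • d - (1 - β) • d = a - d := by
  rw [sub_sub, ← add_smul, add_sub_cancel, one_smul]

theorem Matrix.isUnit_one_sub_diagonal {ι K : Type*} [Fintype ι] [DecidableEq ι] [Field K]
    {z : ι → K} (hz : ∀ i, z i ≠ 1) : IsUnit (1 - diagonal z) := by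
  rw [← diagonal_one, diagonal_sub, isUnit_diagonal, Pi.isUnit_iff]
  exact fun i => (sub_ne_zero.2 (hz i).symm).isUnit

theorem Matrix.neg_one_add_mulVec_eq_zero {ι R : Type*} [Fintype ι] [DecidableEq ι] [Ring R]
    {C : Matrix ι ι R} {z : ι → R} (hCz : C *ᵥ z = z) : (-1 + C) *ᵥ z = 0 := by
  rw [add_mulVec, neg_mulVec, one_mulVec, hCz, neg_add_cancel]

theorem stmt11_general (n : ℕ) (B1 : Matrix (Fin n) (Fin n) ℝ)
    (z : Fin n → ℝ) (hz : ∀ i, 0 < z i ∧ z i < 1)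
    (heqz : (-(1 : Matrix (Fin n) (Fin n) ℝ) +
      ((1 : Matrix (Fin n) (Fin n) ℝ) - Matrix.diagonal z) * B1) *ᵥ z = 0)
    (C : Matrix (Fin n) (Fin n) ℝ) (hCz : C *ᵥ z = z) :
    ∀ β : ℝ, 0 ≤ β → β ≤ 1 →
      (-(1 : Matrix (Fin n) (Fin n) ℝ) +
        ((1 : Matrix (Fin n) (Fin n) ℝ) - β • Matrix.diagonal z
          - (1 - β) • Matrix.diagonal z) * B1) *ᵥ (β • z) = 0 ∧
      (-(1 : Matrix (Fin n) (Fin n) ℝ) +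
        ((1 : Matrix (Fin n) (Fin n) ℝ) - β • Matrix.diagonal z
          - (1 - β) • Matrix.diagonal z) *
          (((1 : Matrix (Fin n) (Fin n) ℝ) - Matrix.diagonal z)⁻¹ * C)) *ᵥ
        ((1 - β) • z) = 0 ∧
      ∀ B3 : Matrix (Fin n) (Fin n) ℝ,
        (-(1 : Matrix (Fin n) (Fin n) ℝ) +
          ((1 : Matrix (Fin n) (Fin n) ℝ) - β • Matrix.diagonal z
            - (1 - β) • Matrix.diagonal z) * B3) *ᵥ (0 : Fin n → ℝ) = 0 := by
  intro β _ _
  have hunit : IsUnit (1 - diagonal z) :=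
    isUnit_one_sub_diagonal fun i => (hz i).2.ne
  simp only [sub_smul_sub_one_sub_smul]
  refine ⟨?_, ?_, fun _ => mulVec_zero _⟩
  · rw [mulVec_smul, heqz, smul_zero]
  · rw [← Matrix.mul_assoc, mul_nonsing_inv _ ((isUnit_iff_isUnit_det _).1 hunit),
      Matrix.one_mul, mulVec_smul, neg_one_add_mulVec_eq_zero hCz, smul_zero]

/-- Line of coexistence equilibria: with `D^k = I`, `z` the endemic equilibrium
of virus 1, `Cz = z`, and `B² = (I − Z)⁻¹C`, each point `(β z, (1−β) z, 0)`
with `β ∈ [0, 1]` is an equilibrium of the tri-virus system. -/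
theorem stmt11 (n : ℕ) (B1 : Matrix (Fin n) (Fin n) ℝ) (hB1 : IrredNonneg B1)
    (z : Fin n → ℝ) (hz : ∀ i, 0 < z i ∧ z i < 1)
    (heqz : (-(1 : Matrix (Fin n) (Fin n) ℝ) +
      ((1 : Matrix (Fin n) (Fin n) ℝ) - Matrix.diagonal z) * B1) *ᵥ z = 0)
    (C : Matrix (Fin n) (Fin n) ℝ) (hC : IrredNonneg C) (hCz : C *ᵥ z = z) :
    ∀ β : ℝ, 0 ≤ β → β ≤ 1 →
      (-(1 : Matrix (Fin n) (Fin n) ℝ) +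
        ((1 : Matrix (Fin n) (Fin n) ℝ) - β • Matrix.diagonal z
          - (1 - β) • Matrix.diagonal z) * B1) *ᵥ (β • z) = 0 ∧
      (-(1 : Matrix (Fin n) (Fin n) ℝ) +
        ((1 : Matrix (Fin n) (Fin n) ℝ) - β • Matrix.diagonal z
          - (1 - β) • Matrix.diagonal z) *
          (((1 : Matrix (Fin n) (Fin n) ℝ) - Matrix.diagonal z)⁻¹ * C)) *ᵥ
        ((1 - β) • z) = 0 ∧
      ∀ B3 : Matrix (Fin n) (Fin n) ℝ,
        (-(1 : Matrix (Fin n) (Fin n) ℝ) +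
          ((1 : Matrix (Fin n) (Fin n) ℝ) - β • Matrix.diagonal z
            - (1 - β) • Matrix.diagonal z) * B3) *ᵥ (0 : Fin n → ℝ) = 0 :=
  stmt11_general n B1 z hz heqz C hCz
end

section
/- Let B¹ be nonnegative irreducible and z with 0 ≪ z ≪ 1 satisfy (−I + (I − Z)B¹)z = 0, Z = diag(z). Let C and Ĉ be nonnegative irreducible matrices with Cz = z and Ĉz = z, and set B² = (I − Z)⁻¹C, B³ = (I − Z)⁻¹Ĉ. Then for all nonnegative scalars α₁, α₂, α₃ with α₁ + α₂ + α₃ = 1, the point (α₁ z, α₂ z, α₃ z) satisfies all three tri-virus equilibrium equations with D^k = I: (−I + (I − α₁Z − α₂Z − α₃Z)B^k)(α_k z) = 0 for k = 1, 2, 3. -/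
open Matrix

/-! Since `α₁ + α₂ + α₃ = 1`, the susceptible fraction `I - α₁Z - α₂Z - α₃Z` collapses to `I - Z`.
The first equation is then the equilibrium equation of `z` scaled by `α₁`, and for `k = 2, 3`
the factor `I - Z` cancels `(I - Z)⁻¹`, leaving `(-I + C) z = 0`, i.e. `Cz = z`. -/

theorem sub_smul_sub_smul_sub_smul_of_add_add_eq_one {R M : Type*} [Ring R] [AddCommGroup M]
    [Module R M] {a b c : R} (h : a + b + c = 1) (x y : M) :
    x - a • y - b • y - c • y = x - y := by
  rw [sub_sub, sub_sub, ← add_smul, ← add_smul, ← add_assoc, h, one_smul]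

namespace Matrix

variable {ι R : Type*} [Fintype ι] [DecidableEq ι]

theorem neg_one_add_mulVec_eq_zero_iff [Ring R] {B : Matrix ι ι R} {v : ι → R} :
    (-1 + B) *ᵥ v = 0 ↔ B *ᵥ v = v := by
  rw [add_mulVec, neg_mulVec, one_mulVec, neg_add_eq_zero, eq_comm]

theorem isUnit_det_one_sub_diagonal [Field R] {z : ι → R} (hz : ∀ i, z i ≠ 1) :
    IsUnit (1 - diagonal z).det := by
  rw [← isUnit_iff_isUnit_det, ← diagonal_one, diagonal_sub, isUnit_diagonal]
  exact Pi.isUnit_iff.2 fun i => (sub_ne_zero.2 (hz i).symm).isUnit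

end Matrix

theorem stmt13_general (n : ℕ) (B1 : Matrix (Fin n) (Fin n) ℝ)
    (z : Fin n → ℝ) (hz : ∀ i, 0 < z i ∧ z i < 1)
    (heqz : (-(1 : Matrix (Fin n) (Fin n) ℝ) +
      ((1 : Matrix (Fin n) (Fin n) ℝ) - Matrix.diagonal z) * B1) *ᵥ z = 0)
    (C Ch : Matrix (Fin n) (Fin n) ℝ) (hCz : C *ᵥ z = z) (hChz : Ch *ᵥ z = z) :
    ∀ a1 a2 a3 : ℝ, 0 ≤ a1 → 0 ≤ a2 → 0 ≤ a3 → a1 + a2 + a3 = 1 →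
      (-(1 : Matrix (Fin n) (Fin n) ℝ) +
        ((1 : Matrix (Fin n) (Fin n) ℝ) - a1 • Matrix.diagonal z
          - a2 • Matrix.diagonal z - a3 • Matrix.diagonal z) * B1) *ᵥ (a1 • z) = 0 ∧
      (-(1 : Matrix (Fin n) (Fin n) ℝ) +
        ((1 : Matrix (Fin n) (Fin n) ℝ) - a1 • Matrix.diagonal z
          - a2 • Matrix.diagonal z - a3 • Matrix.diagonal z) *
          (((1 : Matrix (Fin n) (Fin n) ℝ) - Matrix.diagonal z)⁻¹ * C)) *ᵥ
        (a2 • z) = 0 ∧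
      (-(1 : Matrix (Fin n) (Fin n) ℝ) +
        ((1 : Matrix (Fin n) (Fin n) ℝ) - a1 • Matrix.diagonal z
          - a2 • Matrix.diagonal z - a3 • Matrix.diagonal z) *
          (((1 : Matrix (Fin n) (Fin n) ℝ) - Matrix.diagonal z)⁻¹ * Ch)) *ᵥ
        (a3 • z) = 0 := by
  intro a1 a2 a3 _ _ _ hsum
  have hU : IsUnit (1 - diagonal z).det := isUnit_det_one_sub_diagonal fun i => (hz i).2.ne
  rw [sub_smul_sub_smul_sub_smul_of_add_add_eq_one hsum, mul_nonsing_inv_cancel_left _ _ hU,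
    mul_nonsing_inv_cancel_left _ _ hU]
  simp only [mulVec_smul, heqz, neg_one_add_mulVec_eq_zero_iff.2 hCz,
    neg_one_add_mulVec_eq_zero_iff.2 hChz, smul_zero, and_self]

/-- Plane of coexistence equilibria: with `D^k = I`, `z` the endemic
equilibrium of virus 1, `Cz = z`, `Ĉz = z`, `B² = (I−Z)⁻¹C`, `B³ = (I−Z)⁻¹Ĉ`,
each point `(α₁ z, α₂ z, α₃ z)` with `αᵢ ≥ 0`, `α₁+α₂+α₃ = 1` satisfies all
three tri-virus equilibrium equations. -/
theorem stmt13 (n : ℕ) (B1 : Matrix (Fin n) (Fin n) ℝ) (hB1 : IrredNonneg B1)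
    (z : Fin n → ℝ) (hz : ∀ i, 0 < z i ∧ z i < 1)
    (heqz : (-(1 : Matrix (Fin n) (Fin n) ℝ) +
      ((1 : Matrix (Fin n) (Fin n) ℝ) - Matrix.diagonal z) * B1) *ᵥ z = 0)
    (C Ch : Matrix (Fin n) (Fin n) ℝ) (hC : IrredNonneg C)
    (hCh : IrredNonneg Ch) (hCz : C *ᵥ z = z) (hChz : Ch *ᵥ z = z) :
    ∀ a1 a2 a3 : ℝ, 0 ≤ a1 → 0 ≤ a2 → 0 ≤ a3 → a1 + a2 + a3 = 1 →
      (-(1 : Matrix (Fin n) (Fin n) ℝ) +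
        ((1 : Matrix (Fin n) (Fin n) ℝ) - a1 • Matrix.diagonal z
          - a2 • Matrix.diagonal z - a3 • Matrix.diagonal z) * B1) *ᵥ (a1 • z) = 0 ∧
      (-(1 : Matrix (Fin n) (Fin n) ℝ) +
        ((1 : Matrix (Fin n) (Fin n) ℝ) - a1 • Matrix.diagonal z
          - a2 • Matrix.diagonal z - a3 • Matrix.diagonal z) *
          (((1 : Matrix (Fin n) (Fin n) ℝ) - Matrix.diagonal z)⁻¹ * C)) *ᵥ
        (a2 • z) = 0 ∧
      (-(1 : Matrix (Fin n) (Fin n) ℝ) +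
        ((1 : Matrix (Fin n) (Fin n) ℝ) - a1 • Matrix.diagonal z
          - a2 • Matrix.diagonal z - a3 • Matrix.diagonal z) *
          (((1 : Matrix (Fin n) (Fin n) ℝ) - Matrix.diagonal z)⁻¹ * Ch)) *ᵥ
        (a3 • z) = 0 :=
  stmt13_general n B1 z hz heqz C Ch hCz hChz
end
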